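/- arXiv:2409.10368 — 7 statements merged into one kernel-verified Lean document; each statement's English description precedes it below -/
import Mathlib

section
/- For distributions P, Q on Ω and P', Q' on Ω', the total variation distance between product measures satisfies ‖P⊗P' − Q⊗Q'‖_TV ≤ ‖P−Q‖_TV + ‖P'−Q'‖_TV − ‖P−Q‖_TV · ‖P'−Q'‖_TV. -/
open Finset

/-- Total variation distance between two distributions on a finite set. -/
noncomputable def tv {Ω : Type*} [Fintype Ω] (P Q : Ω → ℝ) : ℝ :=
  (1/2) * ∑ ω, |P ω - Q ω|

lemma tv_eq_one_sub_min {Ω : Type*} [Fintype Ω] (P Q : Ω → ℝ)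
    (hP1 : ∑ ω, P ω = 1) (hQ1 : ∑ ω, Q ω = 1) :
    tv P Q = 1 - ∑ ω, min (P ω) (Q ω) := by
  have h : ∀ ω, |P ω - Q ω| = P ω + Q ω - 2 * min (P ω) (Q ω) := by
    intro ω
    rcases le_total (P ω) (Q ω) with h | h <;>
      simp [abs_of_nonpos, abs_of_nonneg, min_eq_left, min_eq_right, h] <;> ring
  simp only [tv, h, Finset.sum_sub_distrib, Finset.sum_add_distrib, hP1, hQ1]
  rw [← Finset.mul_sum]
  ring

theorem tv_product_le {Ω Ω' : Type*} [Fintype Ω] [Fintype Ω']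
    (P Q : Ω → ℝ) (P' Q' : Ω' → ℝ)
    (hP0 : ∀ ω, 0 ≤ P ω) (hP1 : ∑ ω, P ω = 1)
    (hQ0 : ∀ ω, 0 ≤ Q ω) (hQ1 : ∑ ω, Q ω = 1)
    (hP'0 : ∀ ω, 0 ≤ P' ω) (hP'1 : ∑ ω, P' ω = 1)
    (hQ'0 : ∀ ω, 0 ≤ Q' ω) (hQ'1 : ∑ ω, Q' ω = 1) :
    tv (fun x : Ω × Ω' => P x.1 * P' x.2) (fun x : Ω × Ω' => Q x.1 * Q' x.2)
      ≤ tv P Q + tv P' Q' - tv P Q * tv P' Q' := by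
  have hprodP : ∑ x : Ω × Ω', P x.1 * P' x.2 = 1 := by
    rw [Fintype.sum_prod_type]
    simp [← Finset.mul_sum, hP'1, hP1]
  have hprodQ : ∑ x : Ω × Ω', Q x.1 * Q' x.2 = 1 := by
    rw [Fintype.sum_prod_type]
    simp [← Finset.mul_sum, hQ'1, hQ1]
  rw [tv_eq_one_sub_min _ _ hprodP hprodQ, tv_eq_one_sub_min P Q hP1 hQ1,
    tv_eq_one_sub_min P' Q' hP'1 hQ'1]
  have key : (∑ ω, min (P ω) (Q ω)) * (∑ ω, min (P' ω) (Q' ω))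
      ≤ ∑ x : Ω × Ω', min (P x.1 * P' x.2) (Q x.1 * Q' x.2) := by
    rw [Fintype.sum_prod_type, Finset.sum_mul_sum]
    apply Finset.sum_le_sum
    intro i _
    apply Finset.sum_le_sum
    intro j _
    apply le_min
    · exact mul_le_mul (min_le_left _ _) (min_le_left _ _)
        (le_min (hP'0 j) (hQ'0 j)) (hP0 i)
    · exact mul_le_mul (min_le_right _ _) (min_le_right _ _)
        (le_min (hP'0 j) (hQ'0 j)) (hQ0 i)
  nlinarith [key]
end

section
/- There is a universal constant c > 0 such that for all n and all p, q ∈ [0,1]^n, ‖Ber(p) − Ber(q)‖_TV ≥ c · min{1, ‖p−q‖_2}. -/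
open Finset

/-- Product Bernoulli distribution on `{0,1}^n` with parameters `p`. -/
def berProd {n : ℕ} (p : Fin n → ℝ) : (Fin n → Bool) → ℝ :=
  fun ω => ∏ i, if ω i then p i else 1 - p i

/-!
Flipping the bits where `q i < p i` we may assume `p ≤ q`, and restricting the test statistic to a
set `S` of coordinates we may assume `D = ∑ i ∈ S, (q i - p i) ^ 2 ≤ 9` and `min 1 ‖p - q‖² ≤ D`.
Couple `X ~ Ber(p)` and `Y ~ Ber(q)` monotonically, `Y i = X i || B i` with independent `B i`.
The centred statistic `L ω = ∑ i ∈ S, (q i - p i) * (ω i - p i)` then increases along the coupling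
by the jump statistic `T ≥ 0`, of mean `D = σ ^ 2`, while `L X` has variance at most `D / 4`.
A clamp `f` of `L` to `[0, 1]` with slope `1 / (20 σ)` gains `E (f Y - f X) ≈ E T / (20 σ)`, up
to the events `T > 16 σ` (paid for by `E T ^ 2 ≤ D ^ 2 + σ D`) and `|L X| > 2 σ` (paid for by
Chebyshev applied, independently of the jump at `i`, to `L` with coordinate `i` removed). As `f`
takes values in `[0, 1]`, `tv ≥ E f Y - E f X ≥ σ / 40`.
-/

section PiMass

variable {ι γ : Type*} [Fintype ι]

def piMass (ν : ι → γ → ℝ) (ζ : ι → γ) : ℝ := ∏ i, ν i (ζ i)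

lemma piMass_nonneg {ν : ι → γ → ℝ} (hν : ∀ i x, 0 ≤ ν i x) (ζ : ι → γ) :
    0 ≤ piMass ν ζ :=
  prod_nonneg fun i _ => hν i (ζ i)

lemma sum_piMass [DecidableEq ι] [Fintype γ] {ν : ι → γ → ℝ} (hν : ∀ i, ∑ x, ν i x = 1) :
    ∑ ζ, piMass ν ζ = 1 := by
  simp only [piMass, ← Fintype.prod_sum, hν, prod_const_one]

lemma sum_piMass_mul_comp [DecidableEq ι] [Fintype γ] {β : Type*} [Fintype β] [DecidableEq β]
    (ν : ι → γ → ℝ) (h : ι → γ → β) (F : (ι → β) → ℝ) :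
    ∑ ζ, piMass ν ζ * F (fun i => h i (ζ i)) =
      ∑ η, piMass (fun i b => ∑ x, if h i x = b then ν i x else 0) η * F η := by
  simp only [piMass, Fintype.prod_sum, sum_mul]
  rw [sum_comm]
  refine sum_congr rfl fun ζ _ => ?_
  rw [sum_eq_single (fun i => h i (ζ i))]
  · simp
  · intro η _ hη
    obtain ⟨i, hi⟩ : ∃ i, h i (ζ i) ≠ η i := by
      by_contra! H
      exact hη (funext H).symm
    rw [prod_eq_zero (mem_univ i) (if_neg hi), zero_mul]
  · simp

lemma piMass_update_mul [DecidableEq ι] (ν : ι → γ → ℝ) (ζ : ι → γ) (i : ι) (x : γ) :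
    piMass ν (Function.update ζ i x) * ν i (ζ i) = piMass ν ζ * ν i x := by
  simp only [piMass, Function.apply_update (fun j => ν j),
    prod_update_of_mem (mem_univ i), sdiff_singleton_eq_erase,
    ← mul_prod_erase univ (fun j => ν j (ζ j)) (mem_univ i)]
  ring

lemma sum_piMass_mul_of_update [DecidableEq ι] [Fintype γ] {ν : ι → γ → ℝ}
    (hν : ∀ i, ∑ x, ν i x = 1) (i : ι) (φ : γ → ℝ) {ψ : (ι → γ) → ℝ}
    (hψ : ∀ ζ x, ψ (Function.update ζ i x) = ψ ζ) :
    ∑ ζ, piMass ν ζ * (φ (ζ i) * ψ ζ) = (∑ x, ν i x * φ x) * ∑ ζ, piMass ν ζ * ψ ζ := by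
  -- `(ζ, x) ↦ (update ζ i x, ζ i)` swaps the `i`-th coordinate with a fresh copy of it
  have hσ : Function.Involutive fun z : (ι → γ) × γ => (Function.update z.1 i z.2, z.1 i) :=
    fun z => by simp
  calc ∑ ζ, piMass ν ζ * (φ (ζ i) * ψ ζ)
      = ∑ z : (ι → γ) × γ, piMass ν z.1 * ν i z.2 * (φ (z.1 i) * ψ z.1) := by
        simp only [Fintype.sum_prod_type, ← sum_mul, ← mul_sum, hν, mul_one]
    _ = ∑ z : (ι → γ) × γ, ν i z.2 * φ z.2 * (piMass ν z.1 * ψ z.1) := by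
        refine Fintype.sum_bijective _ hσ.bijective _ _ fun z => ?_
        have h := piMass_update_mul ν z.1 i z.2
        simp only [hψ]
        linear_combination (-(φ (z.1 i) * ψ z.1)) * h
    _ = (∑ x, ν i x * φ x) * ∑ ζ, piMass ν ζ * ψ ζ := by
        rw [Fintype.sum_prod_type, sum_comm, sum_mul_sum]

lemma sum_piMass_mul_apply [DecidableEq ι] [Fintype γ] {ν : ι → γ → ℝ} (hν : ∀ i, ∑ x, ν i x = 1)
    (i : ι) (φ : γ → ℝ) :
    ∑ ζ, piMass ν ζ * φ (ζ i) = ∑ x, ν i x * φ x := by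
  simpa [sum_piMass hν] using sum_piMass_mul_of_update hν i φ (ψ := fun _ => 1) fun _ _ => rfl

lemma sum_piMass_mul_apply_mul_apply [DecidableEq ι] [Fintype γ] {ν : ι → γ → ℝ}
    (hν : ∀ i, ∑ x, ν i x = 1) {i j : ι} (hij : i ≠ j) (φ χ : γ → ℝ) :
    ∑ ζ, piMass ν ζ * (φ (ζ i) * χ (ζ j)) = (∑ x, ν i x * φ x) * ∑ x, ν j x * χ x := by
  rw [sum_piMass_mul_of_update hν i φ fun ζ x => by rw [Function.update_of_ne hij.symm],
    sum_piMass_mul_apply hν]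

lemma sum_piMass_mul_sq_sum [DecidableEq ι] [Fintype γ] {ν : ι → γ → ℝ} (hν : ∀ i, ∑ x, ν i x = 1)
    (s : Finset ι) (g : ι → γ → ℝ) :
    ∑ ζ, piMass ν ζ * (∑ i ∈ s, g i (ζ i)) ^ 2 =
      (∑ i ∈ s, ∑ x, ν i x * g i x) ^ 2 +
        ∑ i ∈ s, (∑ x, ν i x * g i x ^ 2 - (∑ x, ν i x * g i x) ^ 2) := by
  set m : ι → ℝ := fun i => ∑ x, ν i x * g i x
  have pair : ∀ i j, ∑ ζ, piMass ν ζ * (g i (ζ i) * g j (ζ j)) =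
      m i * m j + if i = j then ∑ x, ν i x * g i x ^ 2 - m i ^ 2 else 0 := by
    intro i j
    by_cases hij : i = j
    · subst hij
      simp only [if_true, ← sq, sum_piMass_mul_apply hν i (fun x => g i x ^ 2)]
      ring
    · rw [if_neg hij, add_zero, sum_piMass_mul_apply_mul_apply hν hij]
  calc ∑ ζ, piMass ν ζ * (∑ i ∈ s, g i (ζ i)) ^ 2
      = ∑ i ∈ s, ∑ j ∈ s, ∑ ζ, piMass ν ζ * (g i (ζ i) * g j (ζ j)) := by
        simp only [sq, sum_mul_sum]
        simp only [mul_sum]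
        rw [sum_comm]
        exact sum_congr rfl fun i _ => sum_comm
    _ = ∑ i ∈ s, ∑ j ∈ s, (m i * m j + if i = j then ∑ x, ν i x * g i x ^ 2 - m i ^ 2 else 0) := by
        simp only [pair]
    _ = _ := by
        rw [sq, sum_mul_sum]
        simp only [sum_add_distrib, sum_ite_eq]
        exact congrArg _ (sum_congr rfl fun i hi => if_pos hi)

end PiMass

def bernoulliMass (t : ℝ) (b : Bool) : ℝ := if b then t else 1 - t

lemma sum_bernoulliMass (t : ℝ) : ∑ b, bernoulliMass t b = 1 := by
  simp [bernoulliMass]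

lemma berProd_eq_piMass {n : ℕ} (p : Fin n → ℝ) :
    berProd p = piMass fun i => bernoulliMass (p i) :=
  rfl

lemma sum_berProd {n : ℕ} (p : Fin n → ℝ) : ∑ ω, berProd p ω = 1 :=
  sum_piMass fun i => sum_bernoulliMass (p i)

lemma tv_comp_equiv {Ω : Type*} [Fintype Ω] (e : Ω ≃ Ω) (P Q : Ω → ℝ) :
    tv (P ∘ e) (Q ∘ e) = tv P Q := by
  simp only [tv, Function.comp_apply, e.sum_comp fun ω => |P ω - Q ω|]

lemma sum_mul_sub_sum_mul_le_tv {Ω : Type*} [Fintype Ω] {P Q : Ω → ℝ}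
    (hPQ : ∑ ω, P ω = ∑ ω, Q ω) {f : Ω → ℝ} (hf0 : ∀ ω, 0 ≤ f ω) (hf1 : ∀ ω, f ω ≤ 1) :
    ∑ ω, Q ω * f ω - ∑ ω, P ω * f ω ≤ tv P Q := by
  have key : ∀ ω, Q ω * f ω - P ω * f ω ≤ (|P ω - Q ω| + (Q ω - P ω)) / 2 := by
    intro ω
    rcases le_total (P ω) (Q ω) with h | h
    · rw [abs_of_nonpos (sub_nonpos.2 h)]
      nlinarith [hf1 ω]
    · rw [abs_of_nonneg (sub_nonneg.2 h)]
      nlinarith [hf0 ω]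
  calc ∑ ω, Q ω * f ω - ∑ ω, P ω * f ω = ∑ ω, (Q ω * f ω - P ω * f ω) :=
        (sum_sub_distrib _ _).symm
    _ ≤ ∑ ω, (|P ω - Q ω| + (Q ω - P ω)) / 2 := sum_le_sum fun ω _ => key ω
    _ = tv P Q := by
        rw [← sum_div, sum_add_distrib, sum_sub_distrib, hPQ, tv]
        ring

def flipAt {ι : Type*} [DecidableEq ι] (F : Finset ι) (ω : ι → Bool) : ι → Bool :=
  fun i => if i ∈ F then !ω i else ω i

lemma flipAt_involutive {ι : Type*} [DecidableEq ι] (F : Finset ι) :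
    Function.Involutive (flipAt F) := by
  intro ω
  funext i
  unfold flipAt
  split_ifs <;> simp

lemma berProd_flip {n : ℕ} (F : Finset (Fin n)) (p : Fin n → ℝ) :
    berProd (fun i => if i ∈ F then 1 - p i else p i) = berProd p ∘ flipAt F := by
  funext ω
  refine prod_congr rfl fun i _ => ?_
  by_cases hi : i ∈ F <;> cases hω : ω i <;> simp [flipAt, hi, hω]

/-- Flip the bits where `q < p`. -/
lemma exists_ordered_params_tv_berProd_eq {n : ℕ} {p q : Fin n → ℝ}
    (hp : ∀ i, p i ∈ Set.Icc (0 : ℝ) 1) (hq : ∀ i, q i ∈ Set.Icc (0 : ℝ) 1) :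
    ∃ p' q' : Fin n → ℝ, tv (berProd p') (berProd q') = tv (berProd p) (berProd q) ∧
      (∀ i, 0 ≤ p' i ∧ p' i ≤ q' i ∧ q' i ≤ 1) ∧ ∀ i, (q' i - p' i) ^ 2 = (p i - q i) ^ 2 := by
  set F := univ.filter fun i => q i < p i
  refine ⟨fun i => if i ∈ F then 1 - p i else p i, fun i => if i ∈ F then 1 - q i else q i,
    ?_, fun i => ?_, fun i => ?_⟩
  · rw [berProd_flip, berProd_flip]
    exact tv_comp_equiv (flipAt_involutive F).toPerm _ _
  · obtain ⟨hp0, hp1⟩ := hp i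
    obtain ⟨hq0, hq1⟩ := hq i
    dsimp only
    split_ifs with hiF
    · have := (mem_filter.1 hiF).2
      refine ⟨?_, ?_, ?_⟩ <;> linarith
    · have : ¬q i < p i := fun h => hiF (mem_filter.2 ⟨mem_univ i, h⟩)
      refine ⟨?_, ?_, ?_⟩ <;> linarith
  · dsimp only
    split_ifs <;> ring

lemma exists_subset_sum_mem_Icc {ι : Type*} [DecidableEq ι] (s : Finset ι) {f : ι → ℝ}
    {a : ℝ} (ha : 0 ≤ a) (hf : ∀ i ∈ s, f i ≤ 1) (hs : a ≤ ∑ i ∈ s, f i) :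
    ∃ t ⊆ s, a ≤ ∑ i ∈ t, f i ∧ ∑ i ∈ t, f i ≤ a + 1 := by
  induction s using Finset.induction_on with
  | empty => exact ⟨∅, subset_refl _, hs, by simp; linarith⟩
  | insert j s hj ih =>
    by_cases h : ∑ i ∈ insert j s, f i ≤ a + 1
    · exact ⟨_, subset_refl _, hs, h⟩
    · rw [sum_insert hj] at hs h
      obtain ⟨t, hts, ht⟩ := ih (fun i hi => hf i (mem_insert_of_mem hi))
        (by linarith [hf j (mem_insert_self j s)])
      exact ⟨t, hts.trans (subset_insert j s), ht⟩

lemma le_sqrt_sum_sq_of_mem {ι : Type*} {s : Finset ι} (f : ι → ℝ) {i : ι} (hi : i ∈ s) :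
    f i ≤ √(∑ j ∈ s, f j ^ 2) :=
  (le_abs_self _).trans
    (Real.abs_le_sqrt (single_le_sum (f := fun j => f j ^ 2) (fun _ _ => sq_nonneg _) hi))

lemma sub_sub_le_clamp_sub {x y E : ℝ} (hxy : x ≤ y) (hE : 0 ≤ E)
    (hout : ¬(0 ≤ x ∧ y ≤ 1) → y - x ≤ E) :
    y - x - E ≤ max 0 (min 1 y) - max 0 (min 1 x) := by
  by_cases hin : 0 ≤ x ∧ y ≤ 1
  · rw [min_eq_right hin.2, min_eq_right (by linarith), max_eq_right (by linarith),
      max_eq_right hin.1]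
    linarith
  · have := max_le_max (le_refl (0 : ℝ)) (min_le_min (le_refl (1 : ℝ)) hxy)
    linarith [hout hin]

lemma div_le_clamp_sub {C T K σ : ℝ} (hσ : 0 < σ) (hT : 0 ≤ T) (hK : 0 ≤ K)
    (hbad : 2 * σ < |C| → T * σ ^ 2 ≤ K) :
    (T - T ^ 2 / (16 * σ) - K / σ ^ 2) / (20 * σ) ≤
      max 0 (min 1 ((C + T + 2 * σ) / (20 * σ))) - max 0 (min 1 ((C + 2 * σ) / (20 * σ))) := by
  have h20 : 0 < 20 * σ := by positivity
  have hT2 : 0 ≤ T ^ 2 / (16 * σ) := by positivity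
  have hK2 : 0 ≤ K / σ ^ 2 := by positivity
  have key := sub_sub_le_clamp_sub (x := (C + 2 * σ) / (20 * σ))
    (y := (C + T + 2 * σ) / (20 * σ)) (E := (T ^ 2 / (16 * σ) + K / σ ^ 2) / (20 * σ))
    (div_le_div_of_nonneg_right (by linarith) h20.le) (by positivity) fun hout => by
      rw [← sub_div]
      refine div_le_div_of_nonneg_right ?_ h20.le
      by_cases hbig : 16 * σ ≤ T
      · have : T ≤ T ^ 2 / (16 * σ) := by
          rw [le_div_iff₀ (by positivity)]
          nlinarith
        linarith
      · have hC : 2 * σ < |C| := by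
          rcases not_and_or.1 hout with h | h
          · have := (div_lt_iff₀ h20).1 (not_le.1 h)
            exact lt_abs.2 (Or.inr (by linarith))
          · have := (lt_div_iff₀ h20).1 (not_le.1 h)
            exact lt_abs.2 (Or.inl (by linarith))
        have : T ≤ K / σ ^ 2 := (le_div_iff₀ (by positivity)).2 (hbad hC)
        linarith
  convert key using 1
  field_simp
  ring

/-- The law of `(X, B)` for independent `X ~ Ber(a)` and `B ~ Ber((b - a) / (1 - a))`: then
`X || B ~ Ber(b)`, so `(X, X || B)` is a monotone coupling of `Ber(a)` and `Ber(b)`. For `a = 1`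
the junk value `(b - a) / 0 = 0` is harmless, since then `b = 1`. -/
noncomputable def jointMass (a b : ℝ) (g : Bool × Bool) : ℝ :=
  bernoulliMass a g.1 * bernoulliMass ((b - a) / (1 - a)) g.2

def jump (g : Bool × Bool) : ℝ := if g = (false, true) then 1 else 0

lemma jump_nonneg (g : Bool × Bool) : 0 ≤ jump g := by
  unfold jump
  split_ifs <;> norm_num

lemma jump_sq (g : Bool × Bool) : jump g ^ 2 = jump g := by
  unfold jump
  split_ifs <;> norm_num

section JointMass

variable {a b : ℝ}

lemma one_sub_mul_div_one_sub (hab : a ≤ b) (hb : b ≤ 1) :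
    (1 - a) * ((b - a) / (1 - a)) = b - a := by
  rcases eq_or_ne (1 - a) 0 with h | h
  · rw [h, zero_mul]
    linarith
  · exact mul_div_cancel₀ _ h

lemma jointMass_nonneg (ha : 0 ≤ a) (hab : a ≤ b) (hb : b ≤ 1) (g : Bool × Bool) :
    0 ≤ jointMass a b g := by
  have hr0 : 0 ≤ (b - a) / (1 - a) := div_nonneg (by linarith) (by linarith)
  have hr1 : (b - a) / (1 - a) ≤ 1 := div_le_one_of_le₀ (by linarith) (by linarith)
  rcases g with ⟨_ | _, _ | _⟩ <;>
    simp only [jointMass, bernoulliMass, Bool.false_eq_true, if_true, if_false] <;>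
    apply mul_nonneg <;> linarith

lemma sum_jointMass (a b : ℝ) : ∑ g, jointMass a b g = 1 := by
  simp only [Fintype.sum_prod_type, jointMass, ← mul_sum, sum_bernoulliMass, mul_one]

lemma sum_jointMass_fst (a b : ℝ) (c : Bool) :
    ∑ g, (if g.1 = c then jointMass a b g else 0) = bernoulliMass a c := by
  cases c <;> simp [Fintype.sum_prod_type, jointMass, bernoulliMass] <;> ring

lemma sum_jointMass_or (hab : a ≤ b) (hb : b ≤ 1) (c : Bool) :
    ∑ g, (if (g.1 || g.2) = c then jointMass a b g else 0) = bernoulliMass b c := by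
  have := one_sub_mul_div_one_sub hab hb
  cases c <;> simp [Fintype.sum_prod_type, jointMass, bernoulliMass] <;> linarith

lemma sum_jointMass_mul_jump (hab : a ≤ b) (hb : b ≤ 1) :
    ∑ g, jointMass a b g * jump g = b - a := by
  simpa [Fintype.sum_prod_type, jointMass, bernoulliMass, jump] using
    one_sub_mul_div_one_sub hab hb

lemma sum_jointMass_mul_fst_sub (a b : ℝ) :
    ∑ g, jointMass a b g * ((g.1.toNat : ℝ) - a) = 0 := by
  simp [Fintype.sum_prod_type, jointMass, bernoulliMass]
  ring

lemma sum_jointMass_mul_fst_sub_sq (a b : ℝ) :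
    ∑ g, jointMass a b g * ((g.1.toNat : ℝ) - a) ^ 2 = a * (1 - a) := by
  simp [Fintype.sum_prod_type, jointMass, bernoulliMass]
  ring

end JointMass

section Coupling

variable {ι : Type*}

def jumpStat (p q : ι → ℝ) (S : Finset ι) (ζ : ι → Bool × Bool) : ℝ :=
  ∑ i ∈ S, (q i - p i) * jump (ζ i)

def testStat (p q : ι → ℝ) (S : Finset ι) (ω : ι → Bool) : ℝ :=
  ∑ i ∈ S, (q i - p i) * ((ω i).toNat - p i)

def leaveOneOutStat [DecidableEq ι] (p q : ι → ℝ) (S : Finset ι) (ζ : ι → Bool × Bool) : ℝ :=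
  ∑ i ∈ S, (q i - p i) * (jump (ζ i) * testStat p q (S.erase i) (fun j => (ζ j).1) ^ 2)

variable {p q : ι → ℝ}

lemma testStat_or (S : Finset ι) (ζ : ι → Bool × Bool) :
    testStat p q S (fun i => (ζ i).1 || (ζ i).2) =
      testStat p q S (fun i => (ζ i).1) + jumpStat p q S ζ := by
  simp only [testStat, jumpStat, ← sum_add_distrib]
  refine sum_congr rfl fun i _ => ?_
  rcases ζ i with ⟨_ | _, _ | _⟩ <;> simp [jump]
  ring

lemma jumpStat_mul_sq_le_of_two_mul_lt_abs [DecidableEq ι] {S : Finset ι} {σ : ℝ}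
    (hp : ∀ i ∈ S, 0 ≤ p i ∧ p i ≤ 1) (he : ∀ i ∈ S, 0 ≤ q i - p i ∧ q i - p i ≤ σ)
    (ζ : ι → Bool × Bool)
    (hC : 2 * σ < |testStat p q S fun i => (ζ i).1|) :
    jumpStat p q S ζ * σ ^ 2 ≤ leaveOneOutStat p q S ζ := by
  rw [jumpStat, leaveOneOutStat, sum_mul]
  refine sum_le_sum fun i hi => ?_
  obtain ⟨he0, heσ⟩ := he i hi
  obtain ⟨hp0, hp1⟩ := hp i hi
  have hdev : |(q i - p i) * (((ζ i).1.toNat : ℝ) - p i)| ≤ σ := by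
    have : |((ζ i).1.toNat : ℝ) - p i| ≤ 1 := by
      rw [abs_le]
      cases (ζ i).1 <;> simp <;> constructor <;> linarith
    rw [abs_mul, abs_of_nonneg he0]
    nlinarith [abs_nonneg (((ζ i).1.toNat : ℝ) - p i)]
  have hsplit : testStat p q S (fun j => (ζ j).1) =
      (q i - p i) * (((ζ i).1.toNat : ℝ) - p i) + testStat p q (S.erase i) fun j => (ζ j).1 :=
    (add_sum_erase S _ hi).symm
  have hR : σ ^ 2 ≤ testStat p q (S.erase i) (fun j => (ζ j).1) ^ 2 := by
    have := abs_add_le ((q i - p i) * (((ζ i).1.toNat : ℝ) - p i))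
      (testStat p q (S.erase i) fun j => (ζ j).1)
    rw [← hsplit] at this
    rw [← sq_abs (testStat _ _ _ _)]
    exact pow_le_pow_left₀ (he0.trans heσ) (by linarith) 2
  calc (q i - p i) * jump (ζ i) * σ ^ 2 = (q i - p i) * (jump (ζ i) * σ ^ 2) := by ring
    _ ≤ _ := mul_le_mul_of_nonneg_left (mul_le_mul_of_nonneg_left hR (jump_nonneg _)) he0

variable [Fintype ι] [DecidableEq ι]

lemma sum_coupling_mul_jumpStat (hpq : ∀ i, p i ≤ q i) (hq1 : ∀ i, q i ≤ 1) (S : Finset ι) :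
    ∑ ζ, piMass (fun i => jointMass (p i) (q i)) ζ * jumpStat p q S ζ =
      ∑ i ∈ S, (q i - p i) ^ 2 := by
  simp only [jumpStat, mul_sum]
  rw [sum_comm]
  refine sum_congr rfl fun i _ => ?_
  simp only [mul_left_comm _ (q i - p i), ← mul_sum,
    sum_piMass_mul_apply (fun i => sum_jointMass (p i) (q i)) i jump,
    sum_jointMass_mul_jump (hpq i) (hq1 i), sq]

lemma sum_coupling_mul_jumpStat_sq_le (hpq : ∀ i, p i ≤ q i) (hq1 : ∀ i, q i ≤ 1)
    (S : Finset ι) :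
    ∑ ζ, piMass (fun i => jointMass (p i) (q i)) ζ * jumpStat p q S ζ ^ 2 ≤
      (∑ i ∈ S, (q i - p i) ^ 2) ^ 2 + √(∑ i ∈ S, (q i - p i) ^ 2) * ∑ i ∈ S, (q i - p i) ^ 2 := by
  have mean : ∀ i, ∑ x, jointMass (p i) (q i) x * ((q i - p i) * jump x) = (q i - p i) ^ 2 := by
    intro i
    simp only [mul_left_comm _ (q i - p i), ← mul_sum, sum_jointMass_mul_jump (hpq i) (hq1 i), sq]
  have second : ∀ i, ∑ x, jointMass (p i) (q i) x * ((q i - p i) * jump x) ^ 2 =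
      (q i - p i) ^ 2 * (q i - p i) := by
    intro i
    simp only [mul_pow, jump_sq, mul_left_comm _ ((q i - p i) ^ 2), ← mul_sum,
      sum_jointMass_mul_jump (hpq i) (hq1 i)]
  have h := sum_piMass_mul_sq_sum (fun i => sum_jointMass (p i) (q i)) S
    fun i x => (q i - p i) * jump x
  simp only [mean, second] at h
  simp only [jumpStat, h, mul_sum, add_le_add_iff_left]
  refine sum_le_sum fun i hi => ?_
  have he := le_sqrt_sum_sq_of_mem (fun j => q j - p j) hi
  nlinarith [mul_le_mul_of_nonneg_left he (sq_nonneg (q i - p i)), sq_nonneg ((q i - p i) ^ 2)]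

lemma sum_coupling_mul_testStat_sq_le (s : Finset ι) :
    ∑ ζ, piMass (fun i => jointMass (p i) (q i)) ζ * testStat p q s (fun i => (ζ i).1) ^ 2 ≤
      (∑ i ∈ s, (q i - p i) ^ 2) / 4 := by
  have mean : ∀ i, ∑ x, jointMass (p i) (q i) x * ((q i - p i) * ((x.1.toNat : ℝ) - p i)) = 0 := by
    intro i
    simp only [mul_left_comm _ (q i - p i), ← mul_sum, sum_jointMass_mul_fst_sub, mul_zero]
  have second : ∀ i, ∑ x, jointMass (p i) (q i) x * ((q i - p i) * ((x.1.toNat : ℝ) - p i)) ^ 2 =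
      (q i - p i) ^ 2 * (p i * (1 - p i)) := by
    intro i
    simp only [mul_pow, mul_left_comm _ ((q i - p i) ^ 2), ← mul_sum, sum_jointMass_mul_fst_sub_sq]
  have h := sum_piMass_mul_sq_sum (fun i => sum_jointMass (p i) (q i)) s
    fun i x => (q i - p i) * ((x.1.toNat : ℝ) - p i)
  simp only [mean, second] at h
  simp only [testStat, h, sum_const_zero, sub_zero, zero_pow two_ne_zero, zero_add, sum_div]
  refine sum_le_sum fun i _ => ?_
  nlinarith [mul_nonneg (sq_nonneg (q i - p i)) (sq_nonneg (2 * p i - 1))]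

lemma sum_coupling_mul_jump_mul_testStat_erase_sq
    (hpq : ∀ i, p i ≤ q i) (hq1 : ∀ i, q i ≤ 1) (s : Finset ι) (i : ι) :
    ∑ ζ, piMass (fun i => jointMass (p i) (q i)) ζ *
        (jump (ζ i) * testStat p q (s.erase i) (fun j => (ζ j).1) ^ 2) =
      (q i - p i) * ∑ ζ, piMass (fun i => jointMass (p i) (q i)) ζ *
        testStat p q (s.erase i) (fun j => (ζ j).1) ^ 2 := by
  rw [sum_piMass_mul_of_update (fun i => sum_jointMass (p i) (q i)) i jump,
    sum_jointMass_mul_jump (hpq i) (hq1 i)]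
  intro ζ x
  refine congrArg (· ^ 2) (sum_congr rfl fun j hj => ?_)
  simp only [Function.update_of_ne (ne_of_mem_erase hj)]

lemma sum_coupling_mul_leaveOneOutStat_le
    (hpq : ∀ i, p i ≤ q i) (hq1 : ∀ i, q i ≤ 1) (S : Finset ι) :
    ∑ ζ, piMass (fun i => jointMass (p i) (q i)) ζ * leaveOneOutStat p q S ζ ≤
      (∑ i ∈ S, (q i - p i) ^ 2) ^ 2 / 4 := by
  set ν := piMass fun i => jointMass (p i) (q i)
  set D := ∑ i ∈ S, (q i - p i) ^ 2
  calc ∑ ζ, ν ζ * leaveOneOutStat p q S ζ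
      = ∑ i ∈ S, (q i - p i) * ∑ ζ, ν ζ *
          (jump (ζ i) * testStat p q (S.erase i) (fun j => (ζ j).1) ^ 2) := by
        simp only [leaveOneOutStat, mul_sum]
        rw [sum_comm]
        exact sum_congr rfl fun i _ => sum_congr rfl fun ζ _ => by ring
    _ = ∑ i ∈ S, (q i - p i) ^ 2 *
          ∑ ζ, ν ζ * testStat p q (S.erase i) (fun j => (ζ j).1) ^ 2 := by
        refine sum_congr rfl fun i _ => ?_
        rw [sum_coupling_mul_jump_mul_testStat_erase_sq hpq hq1, ← mul_assoc, ← sq]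
    _ ≤ ∑ i ∈ S, (q i - p i) ^ 2 * (D / 4) := by
        refine sum_le_sum fun i _ => mul_le_mul_of_nonneg_left ?_ (sq_nonneg _)
        refine (sum_coupling_mul_testStat_sq_le _).trans ?_
        gcongr
        exact sum_le_sum_of_subset_of_nonneg (erase_subset i S) fun _ _ _ => sq_nonneg _
    _ = D ^ 2 / 4 := by rw [← sum_mul, sq, mul_div_assoc]

lemma sqrt_sum_sq_div_forty_le_sum_coupling_mul (hpq : ∀ i, p i ≤ q i) (hq1 : ∀ i, q i ≤ 1)
    (S : Finset ι) (hS : ∑ i ∈ S, (q i - p i) ^ 2 ≤ 9) (hσ : 0 < √(∑ i ∈ S, (q i - p i) ^ 2)) :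
    √(∑ i ∈ S, (q i - p i) ^ 2) / 40 ≤
      ∑ ζ, piMass (fun i => jointMass (p i) (q i)) ζ *
        ((jumpStat p q S ζ - jumpStat p q S ζ ^ 2 / (16 * √(∑ i ∈ S, (q i - p i) ^ 2)) -
          leaveOneOutStat p q S ζ / √(∑ i ∈ S, (q i - p i) ^ 2) ^ 2) /
            (20 * √(∑ i ∈ S, (q i - p i) ^ 2))) := by
  set D := ∑ i ∈ S, (q i - p i) ^ 2
  set σ := √D
  set ν := piMass fun i => jointMass (p i) (q i)
  have hσD : σ ^ 2 = D := Real.sq_sqrt (sum_nonneg fun _ _ => sq_nonneg _)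
  have hσ3 : σ ≤ 3 := by nlinarith
  -- with `D = σ ^ 2` the middle term is `σ * (11 - σ) / 320`
  calc σ / 40 ≤ (D - (D ^ 2 + σ * D) / (16 * σ) - D ^ 2 / 4 / σ ^ 2) / (20 * σ) := by
        rw [← hσD]
        field_simp
        nlinarith
    _ ≤ (∑ ζ, ν ζ * jumpStat p q S ζ - (∑ ζ, ν ζ * jumpStat p q S ζ ^ 2) / (16 * σ) -
          (∑ ζ, ν ζ * leaveOneOutStat p q S ζ) / σ ^ 2) / (20 * σ) := by
        rw [sum_coupling_mul_jumpStat hpq hq1]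
        gcongr
        · exact sum_coupling_mul_jumpStat_sq_le hpq hq1 S
        · exact sum_coupling_mul_leaveOneOutStat_le hpq hq1 S
    _ = _ := by simp only [mul_div_assoc', mul_sub, sum_sub_distrib, ← sum_div]

end Coupling

lemma sum_coupling_mul_fst {n : ℕ} (p q : Fin n → ℝ) (F : (Fin n → Bool) → ℝ) :
    ∑ ζ, piMass (fun i => jointMass (p i) (q i)) ζ * F (fun i => (ζ i).1) =
      ∑ ω, berProd p ω * F ω := by
  refine (sum_piMass_mul_comp _ (fun _ (g : Bool × Bool) => g.1) F).trans ?_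
  rw [berProd_eq_piMass]
  simp only [sum_jointMass_fst]

lemma sum_coupling_mul_or {n : ℕ} {p q : Fin n → ℝ} (hpq : ∀ i, p i ≤ q i)
    (hq1 : ∀ i, q i ≤ 1) (F : (Fin n → Bool) → ℝ) :
    ∑ ζ, piMass (fun i => jointMass (p i) (q i)) ζ * F (fun i => (ζ i).1 || (ζ i).2) =
      ∑ ω, berProd q ω * F ω := by
  refine (sum_piMass_mul_comp _ (fun _ (g : Bool × Bool) => g.1 || g.2) F).trans ?_
  rw [berProd_eq_piMass]
  simp only [sum_jointMass_or (hpq _) (hq1 _)]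

theorem sqrt_sum_sq_div_forty_le_tv {n : ℕ} {p q : Fin n → ℝ} (hp0 : ∀ i, 0 ≤ p i)
    (hpq : ∀ i, p i ≤ q i) (hq1 : ∀ i, q i ≤ 1) (S : Finset (Fin n))
    (hS : ∑ i ∈ S, (q i - p i) ^ 2 ≤ 9) :
    √(∑ i ∈ S, (q i - p i) ^ 2) / 40 ≤ tv (berProd p) (berProd q) := by
  set σ := √(∑ i ∈ S, (q i - p i) ^ 2)
  let f : (Fin n → Bool) → ℝ := fun ω => max 0 (min 1 ((testStat p q S ω + 2 * σ) / (20 * σ)))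
  rcases (Real.sqrt_nonneg _).eq_or_lt with hσ | hσ
  · rw [show σ = 0 from hσ.symm, zero_div, tv]
    positivity
  have he : ∀ i ∈ S, 0 ≤ q i - p i ∧ q i - p i ≤ σ := fun i hi =>
    ⟨sub_nonneg.2 (hpq i), le_sqrt_sum_sq_of_mem (fun j => q j - p j) hi⟩
  have hp : ∀ i ∈ S, 0 ≤ p i ∧ p i ≤ 1 := fun i _ => ⟨hp0 i, (hpq i).trans (hq1 i)⟩
  calc σ / 40 ≤ _ := sqrt_sum_sq_div_forty_le_sum_coupling_mul hpq hq1 S hS hσ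
    _ ≤ ∑ ζ, piMass (fun i => jointMass (p i) (q i)) ζ *
          (f (fun i => (ζ i).1 || (ζ i).2) - f (fun i => (ζ i).1)) := by
        refine sum_le_sum fun ζ _ => mul_le_mul_of_nonneg_left ?_
          (piMass_nonneg (fun i => jointMass_nonneg (hp0 i) (hpq i) (hq1 i)) ζ)
        simp only [f, testStat_or]
        exact div_le_clamp_sub hσ
          (sum_nonneg fun i hi => mul_nonneg (he i hi).1 (jump_nonneg _))
          (sum_nonneg fun i hi => mul_nonneg (he i hi).1 (mul_nonneg (jump_nonneg _) (sq_nonneg _)))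
          (jumpStat_mul_sq_le_of_two_mul_lt_abs hp he ζ)
    _ = ∑ ω, berProd q ω * f ω - ∑ ω, berProd p ω * f ω := by
        rw [← sum_coupling_mul_or hpq hq1, ← sum_coupling_mul_fst p q, ← sum_sub_distrib]
        simp only [mul_sub]
    _ ≤ tv (berProd p) (berProd q) :=
        sum_mul_sub_sum_mul_le_tv (by rw [sum_berProd, sum_berProd])
          (fun _ => le_max_left _ _) fun _ => max_le zero_le_one (min_le_left _ _)

theorem berProd_tv_lower_bound :
    ∃ c : ℝ, c > 0 ∧
      ∀ (n : ℕ) (p q : Fin n → ℝ),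
        (∀ i, p i ∈ Set.Icc (0:ℝ) 1) → (∀ i, q i ∈ Set.Icc (0:ℝ) 1) →
        tv (berProd p) (berProd q)
          ≥ c * min 1 (Real.sqrt (∑ i, (p i - q i)^2)) := by
  refine ⟨1 / 40, by norm_num, fun n p q hp hq => ?_⟩
  obtain ⟨p', q', htv, hpq', hsq⟩ := exists_ordered_params_tv_berProd_eq hp hq
  simp only [← hsq, ← htv]
  set D := ∑ i, (q' i - p' i) ^ 2
  obtain ⟨S, hS9, hSD⟩ : ∃ S : Finset (Fin n),
      ∑ i ∈ S, (q' i - p' i) ^ 2 ≤ 9 ∧ min 1 D ≤ ∑ i ∈ S, (q' i - p' i) ^ 2 := by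
    by_cases hD : D ≤ 1
    · exact ⟨univ, by linarith, min_le_right _ _⟩
    · obtain ⟨S, -, h1, h2⟩ := exists_subset_sum_mem_Icc univ zero_le_one
        (f := fun i => (q' i - p' i) ^ 2)
        (fun i _ => by nlinarith [hpq' i]) (by linarith)
      exact ⟨S, by linarith, (min_le_left _ _).trans h1⟩
  calc 1 / 40 * min 1 √D = √(min 1 D) / 40 := by
        rw [Real.sqrt_monotone.map_min, Real.sqrt_one]
        ring
    _ ≤ √(∑ i ∈ S, (q' i - p' i) ^ 2) / 40 := by gcongr
    _ ≤ tv (berProd p') (berProd q') :=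
        sqrt_sum_sq_div_forty_le_tv (fun i => (hpq' i).1) (fun i => (hpq' i).2.1)
          (fun i => (hpq' i).2.2) S hS9
end

section
/- For p ∈ [0,1]^n and q = 1−p (i.e., q_i = 1−p_i for all i), the total variation distance between the product Bernoulli measures satisfies ‖Ber(p) − Ber(q)‖_TV ≤ ‖p−q‖_2 = (Σ_i (p_i−q_i)²)^{1/2}. -/
open Finset

/-- Weierstrass product inequality: `1 - ∏ x ≤ ∑ (1 - x)` for `x i ∈ [0,1]`. -/
lemma weierstrass {ι : Type*} (s : Finset ι) (x : ι → ℝ)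
    (h0 : ∀ i ∈ s, 0 ≤ x i) (h1 : ∀ i ∈ s, x i ≤ 1) :
    1 - ∏ i ∈ s, x i ≤ ∑ i ∈ s, (1 - x i) := by
  induction s using Finset.cons_induction with
  | empty => simp
  | cons a s ha ih =>
    rw [Finset.prod_cons, Finset.sum_cons]
    have hprod0 : 0 ≤ ∏ i ∈ s, x i :=
      Finset.prod_nonneg fun i hi => h0 i (Finset.mem_cons_of_mem hi)
    have hprod1 : ∏ i ∈ s, x i ≤ 1 :=
      Finset.prod_le_one (fun i hi => h0 i (Finset.mem_cons_of_mem hi))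
        (fun i hi => h1 i (Finset.mem_cons_of_mem hi))
    have hih := ih (fun i hi => h0 i (Finset.mem_cons_of_mem hi))
      (fun i hi => h1 i (Finset.mem_cons_of_mem hi))
    have hxa1 : x a ≤ 1 := h1 a (Finset.mem_cons_self a s)
    nlinarith [h0 a (Finset.mem_cons_self a s)]

theorem symm_berProd_tv_upper_bound {n : ℕ} (p q : Fin n → ℝ)
    (hp : ∀ i, p i ∈ Set.Icc (0:ℝ) 1) (hq : ∀ i, q i = 1 - p i) :
    tv (berProd p) (berProd q) ≤ Real.sqrt (∑ i, (p i - q i)^2) := by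
  have hq' : ∀ i, q i ∈ Set.Icc (0:ℝ) 1 := by
    intro i
    obtain ⟨h1, h2⟩ := hp i
    rw [hq i]; constructor <;> [linarith; linarith]
  set P := berProd p with hP
  set Q := berProd q with hQ
  have hPnn : ∀ ω, 0 ≤ P ω := by
    intro ω
    apply Finset.prod_nonneg
    intro i _
    obtain ⟨h1, h2⟩ := hp i
    cases ω i <;> simp <;> linarith
  have hQnn : ∀ ω, 0 ≤ Q ω := by
    intro ω
    apply Finset.prod_nonneg
    intro i _
    obtain ⟨h1, h2⟩ := hq' i
    cases ω i <;> simp <;> linarith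
  -- sum of product over functions
  have key : ∀ (f : Fin n → Bool → ℝ),
      ∑ ω : Fin n → Bool, ∏ i, f i (ω i) = ∏ i, (f i true + f i false) := by
    intro f
    have := Finset.prod_univ_sum (fun _ : Fin n => (Finset.univ : Finset Bool)) f
    simp only [Fintype.piFinset_univ, Fintype.sum_bool] at this
    exact this.symm
  have hPsum : ∑ ω, P ω = 1 := by
    rw [hP]; unfold berProd
    have := key (fun i b => if b then p i else 1 - p i)
    simp only [if_true, if_false] at this
    rw [this]
    simp
  have hQsum : ∑ ω, Q ω = 1 := by
    rw [hQ]; unfold berProd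
    have := key (fun i b => if b then q i else 1 - q i)
    simp only [if_true, if_false] at this
    rw [this]
    simp
  -- the product P ω * Q ω is constant in ω
  set C : ℝ := ∏ i, p i * q i with hC
  have hCnn : 0 ≤ C :=
    Finset.prod_nonneg fun i _ => mul_nonneg (hp i).1 (hq' i).1
  have hPQ : ∀ ω, P ω * Q ω = C := by
    intro ω
    rw [hP, hQ, berProd, berProd, ← Finset.prod_mul_distrib]
    apply Finset.prod_congr rfl
    intro i _
    cases hωi : ω i <;> simp [hq i] <;> ring_nf
  -- Hellinger affinity
  set ρ : ℝ := ∑ ω : Fin n → Bool, Real.sqrt (P ω * Q ω) with hρ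
  have hρval : ρ = (2:ℝ)^n * Real.sqrt C := by
    rw [hρ]
    simp only [hPQ]
    rw [Finset.sum_const]
    simp [Fintype.card_fun, mul_comm]
  have hρsq : ρ^2 = ∏ i, (4 * (p i * q i)) := by
    have hrhs : ∏ i, (4:ℝ) * (p i * q i) = 4^n * ∏ i, p i * q i := by
      rw [Finset.prod_mul_distrib, Finset.prod_const]
      simp
    have h2 : ((2:ℝ)^n)^2 = 4^n := by
      rw [← pow_mul, mul_comm, pow_mul]; norm_num
    rw [hρval, mul_pow, Real.sq_sqrt hCnn, hC, hrhs, h2]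
  -- Cauchy–Schwarz
  have habs : ∀ ω, |P ω - Q ω| =
      |Real.sqrt (P ω) - Real.sqrt (Q ω)| * (Real.sqrt (P ω) + Real.sqrt (Q ω)) := by
    intro ω
    have h1 : (Real.sqrt (P ω) - Real.sqrt (Q ω)) * (Real.sqrt (P ω) + Real.sqrt (Q ω))
        = P ω - Q ω := by
      have := Real.sq_sqrt (hPnn ω)
      have := Real.sq_sqrt (hQnn ω)
      nlinarith
    have h2 : 0 ≤ Real.sqrt (P ω) + Real.sqrt (Q ω) :=
      add_nonneg (Real.sqrt_nonneg _) (Real.sqrt_nonneg _)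
    rw [← h1, abs_mul, abs_of_nonneg h2]
  have hCS := Finset.sum_mul_sq_le_sq_mul_sq Finset.univ
    (fun ω : Fin n → Bool => |Real.sqrt (P ω) - Real.sqrt (Q ω)|)
    (fun ω : Fin n → Bool => Real.sqrt (P ω) + Real.sqrt (Q ω))
  have hsum1 : ∑ ω : Fin n → Bool, |Real.sqrt (P ω) - Real.sqrt (Q ω)|^2 = 2 - 2 * ρ := by
    have : ∀ ω : Fin n → Bool, |Real.sqrt (P ω) - Real.sqrt (Q ω)|^2
        = P ω + Q ω - 2 * Real.sqrt (P ω * Q ω) := by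
      intro ω
      rw [sq_abs, Real.sqrt_mul (hPnn ω)]
      have := Real.sq_sqrt (hPnn ω)
      have := Real.sq_sqrt (hQnn ω)
      ring_nf
      nlinarith
    rw [Finset.sum_congr rfl (fun ω _ => this ω)]
    rw [Finset.sum_sub_distrib, Finset.sum_add_distrib, hPsum, hQsum,
      ← Finset.mul_sum, ← hρ]
    ring
  have hsum2 : ∑ ω : Fin n → Bool, (Real.sqrt (P ω) + Real.sqrt (Q ω))^2 = 2 + 2 * ρ := by
    have : ∀ ω : Fin n → Bool, (Real.sqrt (P ω) + Real.sqrt (Q ω))^2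
        = P ω + Q ω + 2 * Real.sqrt (P ω * Q ω) := by
      intro ω
      rw [Real.sqrt_mul (hPnn ω)]
      have := Real.sq_sqrt (hPnn ω)
      have := Real.sq_sqrt (hQnn ω)
      nlinarith
    rw [Finset.sum_congr rfl (fun ω _ => this ω)]
    rw [Finset.sum_add_distrib, Finset.sum_add_distrib, hPsum, hQsum,
      ← Finset.mul_sum, ← hρ]
    ring
  have hCS' : (∑ ω : Fin n → Bool, |P ω - Q ω|)^2 ≤ 4 * (1 - ρ^2) := by
    calc (∑ ω : Fin n → Bool, |P ω - Q ω|)^2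
        = (∑ ω : Fin n → Bool, |Real.sqrt (P ω) - Real.sqrt (Q ω)|
            * (Real.sqrt (P ω) + Real.sqrt (Q ω)))^2 := by
          rw [Finset.sum_congr rfl (fun ω _ => habs ω)]
      _ ≤ (∑ ω : Fin n → Bool, |Real.sqrt (P ω) - Real.sqrt (Q ω)|^2)
            * ∑ ω : Fin n → Bool, (Real.sqrt (P ω) + Real.sqrt (Q ω))^2 := hCS
      _ = (2 - 2 * ρ) * (2 + 2 * ρ) := by rw [hsum1, hsum2]
      _ = 4 * (1 - ρ^2) := by ring
  -- Weierstrass bound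
  have hweier : 1 - ρ^2 ≤ ∑ i, (p i - q i)^2 := by
    rw [hρsq]
    have h0 : ∀ i ∈ (Finset.univ : Finset (Fin n)), 0 ≤ 4 * (p i * q i) := by
      intro i _
      have := mul_nonneg (hp i).1 (hq' i).1
      linarith
    have h1 : ∀ i ∈ (Finset.univ : Finset (Fin n)), 4 * (p i * q i) ≤ 1 := by
      intro i _
      obtain ⟨ha, hb⟩ := hp i
      rw [hq i]; nlinarith [sq_nonneg (2 * p i - 1)]
    have := weierstrass Finset.univ (fun i => 4 * (p i * q i)) h0 h1
    have heq : ∀ i : Fin n, 1 - 4 * (p i * q i) = (p i - q i)^2 := by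
      intro i; rw [hq i]; ring
    calc 1 - ∏ i, 4 * (p i * q i) ≤ ∑ i, (1 - 4 * (p i * q i)) := this
      _ = ∑ i, (p i - q i)^2 := Finset.sum_congr rfl (fun i _ => heq i)
  -- finish
  have hS : 0 ≤ ∑ i, (p i - q i)^2 := Finset.sum_nonneg fun i _ => sq_nonneg _
  have habsnn : 0 ≤ ∑ ω : Fin n → Bool, |P ω - Q ω| :=
    Finset.sum_nonneg fun ω _ => abs_nonneg _
  have hfinal : ∑ ω : Fin n → Bool, |P ω - Q ω| ≤ 2 * Real.sqrt (∑ i, (p i - q i)^2) := by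
    have h4 : (∑ ω : Fin n → Bool, |P ω - Q ω|)^2 ≤ 4 * ∑ i, (p i - q i)^2 := by
      linarith
    have : ∑ ω : Fin n → Bool, |P ω - Q ω| ≤ Real.sqrt (4 * ∑ i, (p i - q i)^2) := by
      rw [Real.le_sqrt habsnn (by linarith)]
      exact h4
    calc ∑ ω : Fin n → Bool, |P ω - Q ω| ≤ Real.sqrt (4 * ∑ i, (p i - q i)^2) := this
      _ = 2 * Real.sqrt (∑ i, (p i - q i)^2) := by
          rw [show (4:ℝ) = 2^2 by norm_num, Real.sqrt_mul (by positivity),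
            Real.sqrt_sq (by norm_num)]
  rw [tv]
  linarith
end

section
/- Let X_1,…,X_n be independent symmetric real random variables, and let f : ℝ → ℝ be an increasing concave function with f(0) = 0. Set Y = |Σ_i X_i| and Z = (Σ_i X_i²)^{1/2}. Then E[f(Z)] ≤ c · E[f(Y)] with c = (1/√2 − 1/4)^{−1}. -/
/-!
Flipping the signs of independent symmetric variables does not change their joint law, so
`E f |∑ Xᵢ| = E 𝔼_ε f |∑ εᵢ Xᵢ|` with `ε` uniform on `{±1}ⁿ`, and it suffices to show
`(1/√2 - 1/4) f z ≤ 𝔼_ε f |S|` for `S = ∑ εᵢ aᵢ` with a fixed vector `a` and `z = ‖a‖₂`.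
Concavity and `f 0 = 0` give `f x ≥ (f z / z) min x z ≥ (f z / z) (x - x² / (4z))` for `x ≥ 0`;
averaging with `𝔼 S² = z²` and Szarek's bound `𝔼 |S| ≥ z / √2` gives the claim. Szarek's bound
is a Poincaré inequality on the cube for the even function `|S|`, whose discrete derivatives
are bounded by `|aᵢ|`.
-/

open Finset Function MeasureTheory ProbabilityTheory
open scoped BigOperators

namespace BooleanCube

def spin (b : Bool) : ℝ := if b then 1 else -1

@[simp] lemma spin_true : spin true = 1 := rfl

@[simp] lemma spin_false : spin false = -1 := rfl

lemma spin_not (b : Bool) : spin (!b) = -spin b := by cases b <;> simp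

lemma spin_mul_self (b : Bool) : spin b * spin b = 1 := by cases b <;> simp

variable {ι : Type*}

def walsh (T : Finset ι) (s : ι → Bool) : ℝ := ∏ i ∈ T, spin (s i)

lemma sum_walsh_mul_walsh [Fintype ι] (s s' : ι → Bool) :
    ∑ T, walsh T s * walsh T s' = if s = s' then 2 ^ Fintype.card ι else 0 := by
  have h : ∑ T, walsh T s * walsh T s' = ∏ i, (1 + spin (s i) * spin (s' i)) := by
    simp_rw [prod_one_add, powerset_univ, walsh, prod_mul_distrib]
  rw [h]
  split_ifs with hss
  · subst hss
    simp [spin_mul_self, one_add_one_eq_two]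
  · obtain ⟨i, hi⟩ := Function.ne_iff.1 hss
    refine prod_eq_zero (mem_univ i) ?_
    cases hs : s i <;> cases hs' : s' i <;> simp_all

variable [DecidableEq ι]

def flipAt (i : ι) (s : ι → Bool) : ι → Bool := update s i (!s i)

lemma flipAt_involutive (i : ι) : Involutive (flipAt i) := fun s => by
  simp [flipAt]

lemma walsh_update {T : Finset ι} {i : ι} (hi : i ∈ T) (s : ι → Bool) (b : Bool) :
    walsh T (update s i b) = spin b * walsh (T.erase i) s := by
  rw [walsh, ← mul_prod_erase _ _ hi, update_self]
  congr 1
  exact prod_congr rfl fun j hj => by rw [update_of_ne (ne_of_mem_erase hj)]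

lemma walsh_flipAt {T : Finset ι} {i : ι} (hi : i ∈ T) (s : ι → Bool) :
    walsh T (flipAt i s) = -walsh T s := by
  rw [flipAt, walsh_update hi, spin_not, neg_mul, ← walsh_update hi, update_eq_self]

noncomputable def discreteDeriv (F : (ι → Bool) → ℝ) (i : ι) (s : ι → Bool) : ℝ :=
  (F (update s i true) - F (update s i false)) / 2

lemma abs_discreteDeriv_abs_le (F : (ι → Bool) → ℝ) (i : ι) (s : ι → Bool) :
    |discreteDeriv (fun s => |F s|) i s| ≤ |discreteDeriv F i s| := by
  simp only [discreteDeriv, abs_div]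
  exact div_le_div_of_nonneg_right (abs_abs_sub_abs_le_abs_sub _ _) (abs_nonneg 2)

variable [Fintype ι]

lemma expect_comp_flipAt (F : (ι → Bool) → ℝ) (i : ι) :
    𝔼 s, F (flipAt i s) = 𝔼 s, F s :=
  Fintype.expect_equiv (flipAt_involutive i).toPerm _ _ fun _ => rfl

lemma expect_update_add_update (F : (ι → Bool) → ℝ) (i : ι) :
    𝔼 s, (F (update s i true) + F (update s i false)) = 2 * 𝔼 s, F s := by
  have h : ∀ s, F (update s i true) + F (update s i false) = F s + F (flipAt i s) := by
    intro s
    cases hs : s i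
    · rw [← hs, update_eq_self, add_comm, flipAt, hs, Bool.not_false]
    · rw [← hs, update_eq_self, flipAt, hs, Bool.not_true]
  simp_rw [h, expect_add_distrib, expect_comp_flipAt, two_mul]

lemma expect_walsh_of_nonempty {T : Finset ι} (hT : T.Nonempty) : 𝔼 s, walsh T s = 0 := by
  obtain ⟨i, hi⟩ := hT
  have h := expect_comp_flipAt (walsh T) i
  simp_rw [walsh_flipAt hi, expect_neg_distrib] at h
  linarith

noncomputable def fourierCoeff (F : (ι → Bool) → ℝ) (T : Finset ι) : ℝ := 𝔼 s, F s * walsh T s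

lemma fourierCoeff_empty (F : (ι → Bool) → ℝ) : fourierCoeff F ∅ = 𝔼 s, F s := by
  simp [fourierCoeff, walsh]

lemma sum_fourierCoeff_mul_walsh (F : (ι → Bool) → ℝ) (s : ι → Bool) :
    ∑ T, fourierCoeff F T * walsh T s = F s := by
  simp_rw [fourierCoeff, expect_mul, ← expect_sum_comm, mul_assoc, ← mul_sum,
    sum_walsh_mul_walsh, mul_ite, mul_zero, Fintype.expect_ite_eq', Fintype.card_fun,
    Fintype.card_bool, Nat.cast_pow, Nat.cast_ofNat]
  rw [NNRat.smul_def]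
  push_cast
  field_simp

theorem sum_fourierCoeff_sq (F : (ι → Bool) → ℝ) :
    ∑ T, fourierCoeff F T ^ 2 = 𝔼 s, F s ^ 2 := by
  calc ∑ T, fourierCoeff F T ^ 2 = ∑ T, 𝔼 s, F s * (fourierCoeff F T * walsh T s) := by
        refine sum_congr rfl fun T _ => ?_
        rw [sq, fourierCoeff, mul_expect]
        exact expect_congr rfl fun s _ => by ring
    _ = 𝔼 s, F s ^ 2 := by
        simp_rw [← expect_sum_comm, ← mul_sum, sum_fourierCoeff_mul_walsh, sq]

lemma fourierCoeff_eq_fourierCoeff_discreteDeriv (F : (ι → Bool) → ℝ) {T : Finset ι} {i : ι}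
    (hi : i ∈ T) : fourierCoeff F T = fourierCoeff (discreteDeriv F i) (T.erase i) := by
  have h := expect_update_add_update (fun s => F s * walsh T s) i
  simp only [walsh_update hi, spin_true, spin_false] at h
  rw [fourierCoeff, fourierCoeff, ← mul_right_inj' (two_ne_zero (α := ℝ)), ← h, mul_expect]
  exact expect_congr rfl fun s _ => by rw [discreteDeriv]; ring

lemma sum_filter_mem_fourierCoeff_sq_le (F : (ι → Bool) → ℝ) (i : ι) :
    ∑ T with i ∈ T, fourierCoeff F T ^ 2 ≤ 𝔼 s, discreteDeriv F i s ^ 2 := by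
  rw [← sum_fourierCoeff_sq]
  calc ∑ T with i ∈ T, fourierCoeff F T ^ 2
        = ∑ T with i ∈ T, fourierCoeff (discreteDeriv F i) (T.erase i) ^ 2 :=
          sum_congr rfl fun T hT => by
            rw [fourierCoeff_eq_fourierCoeff_discreteDeriv F (mem_filter.1 hT).2]
    _ = ∑ U ∈ (univ.filter fun T : Finset ι => i ∈ T).image fun T => T.erase i,
          fourierCoeff (discreteDeriv F i) U ^ 2 := by
          rw [sum_image]
          intro T hT U hU
          exact erase_injOn' i (mem_filter.1 hT).2 (mem_filter.1 hU).2
    _ ≤ ∑ U, fourierCoeff (discreteDeriv F i) U ^ 2 :=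
          sum_le_sum_of_subset_of_nonneg (subset_univ _) fun _ _ _ => sq_nonneg _

lemma sum_card_mul_fourierCoeff_sq_le (F : (ι → Bool) → ℝ) :
    ∑ T, (#T : ℝ) * fourierCoeff F T ^ 2 ≤ ∑ i, 𝔼 s, discreteDeriv F i s ^ 2 := by
  calc ∑ T, (#T : ℝ) * fourierCoeff F T ^ 2
        = ∑ i, ∑ T with i ∈ T, fourierCoeff F T ^ 2 := by
          simp_rw [sum_filter]
          rw [sum_comm]
          exact sum_congr rfl fun T _ => by rw [sum_ite_mem, univ_inter, sum_const, nsmul_eq_mul]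
    _ ≤ ∑ i, 𝔼 s, discreteDeriv F i s ^ 2 :=
          sum_le_sum fun i _ => sum_filter_mem_fourierCoeff_sq_le F i

lemma fourierCoeff_eq_zero_of_odd {F : (ι → Bool) → ℝ} (hF : ∀ s, F (fun j => !s j) = F s)
    {T : Finset ι} (hT : Odd #T) : fourierCoeff F T = 0 := by
  have hnot : Involutive fun (s : ι → Bool) j => !s j := fun s => by simp
  have h : fourierCoeff F T = -fourierCoeff F T := by
    rw [fourierCoeff, ← expect_neg_distrib]
    refine Fintype.expect_equiv hnot.toPerm _ _ fun s => ?_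
    simp only [Involutive.coe_toPerm, hF, walsh, spin_not, prod_neg, hT.neg_one_pow]
    ring
  linarith

/-- Poincaré inequality for even functions: evenness kills the Fourier levels of odd size, so
every nonconstant level has size at least `2`, which halves the usual constant. -/
theorem expect_sq_le_of_even {F : (ι → Bool) → ℝ} (hF : ∀ s, F (fun j => !s j) = F s) :
    𝔼 s, F s ^ 2 ≤ (𝔼 s, F s) ^ 2 + (∑ i, 𝔼 s, discreteDeriv F i s ^ 2) / 2 := by
  have hterm : ∀ T ∈ univ.erase ∅, fourierCoeff F T ^ 2 ≤ #T * fourierCoeff F T ^ 2 / 2 := by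
    intro T hT
    rcases Nat.even_or_odd #T with hev | hodd
    · have hpos := card_pos.2 (nonempty_iff_ne_empty.2 (ne_of_mem_erase hT))
      have h2 : (2 : ℝ) ≤ #T := by
        obtain ⟨k, hk⟩ := hev
        exact_mod_cast (by omega : 2 ≤ #T)
      nlinarith [sq_nonneg (fourierCoeff F T)]
    · simp [fourierCoeff_eq_zero_of_odd hF hodd]
  calc 𝔼 s, F s ^ 2 = fourierCoeff F ∅ ^ 2 + ∑ T ∈ univ.erase ∅, fourierCoeff F T ^ 2 := by
        rw [add_sum_erase _ (fun T => fourierCoeff F T ^ 2) (mem_univ _), sum_fourierCoeff_sq]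
    _ ≤ fourierCoeff F ∅ ^ 2 + ∑ T, #T * fourierCoeff F T ^ 2 / 2 := by
        gcongr
        exact (sum_le_sum hterm).trans <|
          sum_le_sum_of_subset_of_nonneg (erase_subset _ _) fun _ _ _ => by positivity
    _ ≤ (𝔼 s, F s) ^ 2 + (∑ i, 𝔼 s, discreteDeriv F i s ^ 2) / 2 := by
        rw [fourierCoeff_empty, ← sum_div]
        gcongr
        exact sum_card_mul_fourierCoeff_sq_le F

def signedSum (a : ι → ℝ) (s : ι → Bool) : ℝ := ∑ i, spin (s i) * a i

lemma discreteDeriv_signedSum (a : ι → ℝ) (i : ι) (s : ι → Bool) :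
    discreteDeriv (signedSum a) i s = a i := by
  rw [discreteDeriv, signedSum, signedSum, ← sum_sub_distrib,
    sum_eq_single i fun j _ hj => by simp [update_of_ne hj]]
  · simp only [update_self, spin_true, spin_false]
    ring
  · simp

lemma expect_spin_mul_spin (j k : ι) :
    𝔼 s : ι → Bool, spin (s j) * spin (s k) = if j = k then 1 else 0 := by
  split_ifs with hjk
  · simp [hjk, spin_mul_self]
  · rw [← expect_walsh_of_nonempty (insert_nonempty j {k})]
    simp [walsh, prod_pair hjk]

lemma expect_signedSum_sq (a : ι → ℝ) : 𝔼 s, signedSum a s ^ 2 = ∑ i, a i ^ 2 := by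
  have h : ∀ s, signedSum a s ^ 2 = ∑ j, ∑ k, a j * a k * (spin (s j) * spin (s k)) := by
    intro s
    rw [signedSum, sq, sum_mul_sum]
    exact sum_congr rfl fun j _ => sum_congr rfl fun k _ => by ring
  simp_rw [h, expect_sum_comm, ← mul_expect, expect_spin_mul_spin, mul_ite, mul_zero,
    sum_ite_eq, mem_univ, if_true, mul_one, sq]

/-- Szarek's inequality, the optimal `L¹` Khintchine inequality. -/
theorem sum_sq_le_two_mul_sq_expect_abs_signedSum (a : ι → ℝ) :
    ∑ i, a i ^ 2 ≤ 2 * (𝔼 s, |signedSum a s|) ^ 2 := by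
  have h := expect_sq_le_of_even (F := fun s => |signedSum a s|) fun s => by
    simp only [signedSum, spin_not, neg_mul, sum_neg_distrib, abs_neg]
  have hderiv : ∑ i, 𝔼 s, discreteDeriv (fun s => |signedSum a s|) i s ^ 2 ≤ ∑ i, a i ^ 2 := by
    gcongr with i
    refine (expect_le_expect fun s _ => sq_le_sq.2 ?_).trans (Fintype.expect_const _).le
    simpa [discreteDeriv_signedSum] using abs_discreteDeriv_abs_le (signedSum a) i s
  simp only [sq_abs, expect_signedSum_sq] at h
  linarith

end BooleanCube

lemma ConcaveOn.mul_le_apply_mul {s : Set ℝ} {f : ℝ → ℝ} (hf : ConcaveOn ℝ s f) (h0 : 0 ∈ s)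
    (hf0 : f 0 = 0) {x t : ℝ} (hx : x ∈ s) (ht0 : 0 ≤ t) (ht1 : t ≤ 1) : t * f x ≤ f (t * x) := by
  simpa [hf0] using hf.2 hx h0 ht0 (sub_nonneg.2 ht1) (add_sub_cancel t 1)

lemma div_mul_min_le_of_concaveOn {f : ℝ → ℝ} (hmono : MonotoneOn f (Set.Ici 0))
    (hconc : ConcaveOn ℝ (Set.Ici 0) f) (hf0 : f 0 = 0) {x z : ℝ} (hx : 0 ≤ x) (hz : 0 < z) :
    f z / z * min x z ≤ f x := by
  have hmin : 0 ≤ min x z := le_min hx hz.le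
  calc f z / z * min x z = min x z / z * f z := by ring
    _ ≤ f (min x z / z * z) := hconc.mul_le_apply_mul Set.self_mem_Ici hf0 hz.le (by positivity)
        (div_le_one_of_le₀ (min_le_right _ _) hz.le)
    _ = f (min x z) := by rw [div_mul_cancel₀ _ hz.ne']
    _ ≤ f x := hmono hmin hx (min_le_left _ _)

lemma sub_sq_div_le_min (x : ℝ) {z : ℝ} (hz : 0 < z) : x - x ^ 2 / (4 * z) ≤ min x z := by
  rcases le_total x z with h | h
  · have : 0 ≤ x ^ 2 / (4 * z) := by positivity
    rw [min_eq_left h]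
    linarith
  · rw [min_eq_right h, sub_le_comm, le_div_iff₀ (by positivity)]
    nlinarith [sq_nonneg (x - 2 * z)]

namespace BooleanCube

variable {ι : Type*} [Fintype ι] [DecidableEq ι]

lemma sqrt_sum_sq_div_sqrt_two_le_expect_abs_signedSum (a : ι → ℝ) :
    √(∑ i, a i ^ 2) / √2 ≤ 𝔼 s, |signedSum a s| := by
  have hE : 0 ≤ 𝔼 s, |signedSum a s| := expect_nonneg fun _ _ => abs_nonneg _
  rw [div_le_iff₀ (by positivity), mul_comm, ← Real.sqrt_sq hE, ← Real.sqrt_mul zero_le_two]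
  exact Real.sqrt_le_sqrt (sum_sq_le_two_mul_sq_expect_abs_signedSum a)

theorem mul_apply_sqrt_sum_sq_le_expect_apply_abs_signedSum {f : ℝ → ℝ}
    (hmono : MonotoneOn f (Set.Ici 0)) (hconc : ConcaveOn ℝ (Set.Ici 0) f) (hf0 : f 0 = 0)
    (a : ι → ℝ) : (1 / √2 - 1 / 4) * f √(∑ i, a i ^ 2) ≤ 𝔼 s, f |signedSum a s| := by
  have hf_nonneg : ∀ x, 0 ≤ x → 0 ≤ f x := fun x hx => hf0 ▸ hmono Set.self_mem_Ici hx hx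
  rcases (Real.sqrt_nonneg (∑ i, a i ^ 2)).eq_or_lt with hz | hz
  · rw [← hz, hf0, mul_zero]
    exact expect_nonneg fun s _ => hf_nonneg _ (abs_nonneg _)
  set z := √(∑ i, a i ^ 2)
  have hz2 : z ^ 2 = ∑ i, a i ^ 2 := Real.sq_sqrt (by positivity)
  have hslope : 0 ≤ f z / z := div_nonneg (hf_nonneg z hz.le) hz.le
  calc (1 / √2 - 1 / 4) * f z = f z / z * (z / √2 - (∑ i, a i ^ 2) / (4 * z)) := by
        rw [← hz2]
        field_simp
    _ ≤ f z / z * (𝔼 s, |signedSum a s| - 𝔼 s, signedSum a s ^ 2 / (4 * z)) := by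
        rw [← expect_div, expect_signedSum_sq]
        gcongr
        exact sqrt_sum_sq_div_sqrt_two_le_expect_abs_signedSum a
    _ = 𝔼 s, f z / z * (|signedSum a s| - |signedSum a s| ^ 2 / (4 * z)) := by
        simp_rw [sq_abs, ← expect_sub_distrib, mul_expect]
    _ ≤ 𝔼 s, f z / z * min |signedSum a s| z := by
        gcongr with s
        exact sub_sq_div_le_min _ hz
    _ ≤ 𝔼 s, f |signedSum a s| :=
        expect_le_expect fun s _ => div_mul_min_le_of_concaveOn hmono hconc hf0 (abs_nonneg _) hz

end BooleanCube

section Probability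

variable {Ω ι : Type*} [MeasurableSpace Ω] {μ : Measure Ω}

lemma integrable_finsetExpect {s : Finset ι} {G : ι → Ω → ℝ} (hG : ∀ i ∈ s, Integrable (G i) μ) :
    Integrable (fun ω => 𝔼 i ∈ s, G i ω) μ := by
  simp_rw [expect_eq_sum_div_card]
  exact (integrable_finsetSum s hG).div_const _

lemma integral_finsetExpect {s : Finset ι} {G : ι → Ω → ℝ} (hG : ∀ i ∈ s, Integrable (G i) μ) :
    ∫ ω, 𝔼 i ∈ s, G i ω ∂μ = 𝔼 i ∈ s, ∫ ω, G i ω ∂μ := by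
  simp_rw [expect_eq_sum_div_card]
  rw [integral_div, integral_finsetSum s hG]

open BooleanCube in
lemma identDistrib_spin_mul [Fintype ι] {X : ι → Ω → ℝ} (hmeas : ∀ i, Measurable (X i))
    (hindep : iIndepFun X μ) (hsymm : ∀ i, μ.map (X i) = μ.map (fun ω => -X i ω))
    (c : ι → Bool) : IdentDistrib (fun ω i => spin (c i) * X i ω) (fun ω i => X i ω) μ μ where
  aemeasurable_fst := (measurable_pi_lambda _ fun i => (hmeas i).const_mul _).aemeasurable
  aemeasurable_snd := (measurable_pi_lambda _ hmeas).aemeasurable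
  map_eq := by
    have hflip := hindep.comp (fun i x => spin (c i) * x) fun i => measurable_const_mul _
    rw [hflip.map_fun_eq_pi_map fun i => ((hmeas i).const_mul _).aemeasurable,
      hindep.map_fun_eq_pi_map fun i => (hmeas i).aemeasurable]
    congr 1
    funext i
    cases c i
    · simp [hsymm i]
    · simp

end Probability

open BooleanCube in
theorem lowther_lemma_general {Ω : Type*} [MeasurableSpace Ω] (μ : Measure Ω)
    {n : ℕ} (X : Fin n → Ω → ℝ)
    (hmeas : ∀ i, Measurable (X i))
    (hindep : iIndepFun X μ)
    (hsymm : ∀ i, μ.map (X i) = μ.map (fun ω => -X i ω))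
    (f : ℝ → ℝ) (hmono : Monotone f) (hconc : ConcaveOn ℝ Set.univ f)
    (hf0 : f 0 = 0)
    (hYint : Integrable (fun ω => f |∑ i, X i ω|) μ) :
    ∫ ω, f (Real.sqrt (∑ i, (X i ω)^2)) ∂μ
      ≤ (1 / Real.sqrt 2 - 1/4)⁻¹ * ∫ ω, f |∑ i, X i ω| ∂μ := by
  have hc : 0 < 1 / √2 - 1 / 4 := by
    rw [sub_pos, one_div_lt_one_div (by norm_num) (by positivity), Real.sqrt_lt' (by norm_num)]
    norm_num
  have hΦ : Measurable fun v : Fin n → ℝ => f |∑ i, v i| := hmono.measurable.comp (by fun_prop)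
  have hflip (c : Fin n → Bool) := (identDistrib_spin_mul hmeas hindep hsymm c).comp hΦ
  have hint (c : Fin n → Bool) : Integrable (fun ω => f |signedSum (X · ω) c|) μ :=
    (hflip c).integrable_iff.2 hYint
  rw [le_inv_mul_iff₀ hc, ← integral_const_mul]
  calc ∫ ω, (1 / √2 - 1 / 4) * f √(∑ i, X i ω ^ 2) ∂μ
      ≤ ∫ ω, 𝔼 c, f |signedSum (X · ω) c| ∂μ :=
        integral_mono_of_nonneg
          (ae_of_all _ fun ω => mul_nonneg hc.le (hf0 ▸ hmono (Real.sqrt_nonneg _)))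
          (integrable_finsetExpect fun c _ => hint c)
          (ae_of_all _ fun ω => mul_apply_sqrt_sum_sq_le_expect_apply_abs_signedSum
            (hmono.monotoneOn _) (hconc.subset (Set.subset_univ _) (convex_Ici 0)) hf0 _)
    _ = ∫ ω, f |∑ i, X i ω| ∂μ := by
        rw [integral_finsetExpect fun c _ => hint c]
        exact (expect_congr rfl fun c _ => (hflip c).integral_eq).trans (Fintype.expect_const _)

theorem lowther_lemma {Ω : Type*} [MeasurableSpace Ω] (μ : Measure Ω)
    [IsProbabilityMeasure μ] {n : ℕ} (X : Fin n → Ω → ℝ)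
    (hmeas : ∀ i, Measurable (X i))
    (hindep : iIndepFun X μ)
    (hsymm : ∀ i, μ.map (X i) = μ.map (fun ω => -X i ω))
    (f : ℝ → ℝ) (hmono : Monotone f) (hconc : ConcaveOn ℝ Set.univ f)
    (hf0 : f 0 = 0)
    (hZint : Integrable (fun ω => f (Real.sqrt (∑ i, (X i ω)^2))) μ)
    (hYint : Integrable (fun ω => f |∑ i, X i ω|) μ) :
    ∫ ω, f (Real.sqrt (∑ i, (X i ω)^2)) ∂μ
      ≤ (1 / Real.sqrt 2 - 1/4)⁻¹ * ∫ ω, f |∑ i, X i ω| ∂μ :=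
  lowther_lemma_general μ X hmeas hindep hsymm f hmono hconc hf0 hYint
end

section
/- Let ε_1,…,ε_n be independent Rademacher random variables (P(ε_i=±1)=1/2) and a ∈ ℝ^n with ‖a‖_2 = 1. Set Y = |Σ_i a_i ε_i|. Then E[min{Y, 1}] ≥ 1/√2 − 1/4. -/
open Finset

namespace RTK

def bflip {n : ℕ} (i : Fin n) (s : Fin n → Bool) : Fin n → Bool :=
  Function.update s i (!(s i))

lemma sum_cons {n : ℕ} (f : (Fin (n+1) → Bool) → ℝ) :
    ∑ s : Fin (n+1) → Bool, f s
      = ∑ t : Fin n → Bool, (f (Fin.cons true t) + f (Fin.cons false t)) := by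
  rw [← (Fin.consEquiv (fun _ => Bool)).sum_comp f, Fintype.sum_prod_type]
  rw [Fintype.sum_bool, ← Finset.sum_add_distrib]; rfl

lemma bflip_cons_zero {n : ℕ} (b : Bool) (t : Fin n → Bool) :
    bflip 0 (Fin.cons b t) = Fin.cons (!b) t := by
  simp [bflip, Fin.update_cons_zero]

lemma bflip_cons_succ {n : ℕ} (i : Fin n) (b : Bool) (t : Fin n → Bool) :
    bflip i.succ (Fin.cons b t) = Fin.cons b (bflip i t) := by
  simp [bflip, ← Fin.cons_update, Fin.cons_succ]

lemma poincare1 : ∀ (n : ℕ) (f : (Fin n → Bool) → ℝ),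
    (2^n : ℝ) * (∑ s : Fin n → Bool, (f s)^2) - (∑ s : Fin n → Bool, f s)^2
      ≤ (2^n : ℝ)/4 * ∑ i : Fin n, ∑ s : Fin n → Bool, (f s - f (bflip i s))^2 := by
  intro n
  induction n with
  | zero =>
      intro f
      simp
  | succ n IH =>
      intro f
      set u : (Fin n → Bool) → ℝ := fun t => f (Fin.cons true t) with hu
      set v : (Fin n → Bool) → ℝ := fun t => f (Fin.cons false t) with hv
      set g : (Fin n → Bool) → ℝ := fun t => (u t + v t)/2 with hg
      set h : (Fin n → Bool) → ℝ := fun t => (u t - v t)/2 with hh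
      have e1 : ∑ s : Fin (n+1) → Bool, f s = 2 * ∑ t : Fin n → Bool, g t := by
        rw [sum_cons f, Finset.mul_sum]
        refine Finset.sum_congr rfl fun t _ => ?_
        simp only [hg, hu, hv]; ring
      have e2 : ∑ s : Fin (n+1) → Bool, (f s)^2
          = ∑ t : Fin n → Bool, (2 * (g t)^2 + 2 * (h t)^2) := by
        rw [sum_cons (fun s => (f s)^2)]
        refine Finset.sum_congr rfl fun t _ => ?_
        simp only [hg, hh, hu, hv]; ring
      have e3 : ∑ s : Fin (n+1) → Bool, (f s - f (bflip 0 s))^2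
          = ∑ t : Fin n → Bool, 8 * (h t)^2 := by
        rw [sum_cons (fun s => (f s - f (bflip 0 s))^2)]
        refine Finset.sum_congr rfl fun t _ => ?_
        rw [bflip_cons_zero, bflip_cons_zero]
        simp only [hh, hu, hv, Bool.not_true, Bool.not_false]; ring
      have e4 : ∀ i : Fin n, ∑ s : Fin (n+1) → Bool, (f s - f (bflip i.succ s))^2
          = ∑ t : Fin n → Bool,
              (2 * (g t - g (bflip i t))^2 + 2 * (h t - h (bflip i t))^2) := by
        intro i
        rw [sum_cons (fun s => (f s - f (bflip i.succ s))^2)]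
        refine Finset.sum_congr rfl fun t _ => ?_
        rw [bflip_cons_succ, bflip_cons_succ]
        simp only [hg, hh, hu, hv]; ring
      have e5 : ∑ i : Fin (n+1), ∑ s : Fin (n+1) → Bool, (f s - f (bflip i s))^2
          = (∑ t : Fin n → Bool, 8 * (h t)^2)
            + ∑ i : Fin n, ∑ t : Fin n → Bool,
                (2 * (g t - g (bflip i t))^2 + 2 * (h t - h (bflip i t))^2) := by
        rw [Fin.sum_univ_succ, e3]
        congr 1
        exact Finset.sum_congr rfl fun i _ => e4 i
      rw [e1, e2, e5]
      have IHg := IH g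
      have hnn : (0:ℝ) ≤ ∑ i : Fin n, ∑ t : Fin n → Bool, (h t - h (bflip i t))^2 := by
        positivity
      have sg : ∑ t : Fin n → Bool, (2 * (g t)^2 + 2 * (h t)^2)
          = 2 * (∑ t : Fin n → Bool, (g t)^2) + 2 * ∑ t : Fin n → Bool, (h t)^2 := by
        rw [Finset.sum_add_distrib, Finset.mul_sum, Finset.mul_sum]
      have sd : ∑ i : Fin n, ∑ t : Fin n → Bool,
            (2 * (g t - g (bflip i t))^2 + 2 * (h t - h (bflip i t))^2)
          = 2 * (∑ i : Fin n, ∑ t : Fin n → Bool, (g t - g (bflip i t))^2)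
            + 2 * ∑ i : Fin n, ∑ t : Fin n → Bool, (h t - h (bflip i t))^2 := by
        rw [Finset.mul_sum, Finset.mul_sum, ← Finset.sum_add_distrib]
        refine Finset.sum_congr rfl fun i _ => ?_
        rw [Finset.mul_sum, Finset.mul_sum, ← Finset.sum_add_distrib]
      rw [sg, sd]
      have s8 : ∑ t : Fin n → Bool, 8 * (h t)^2 = 8 * ∑ t : Fin n → Bool, (h t)^2 := by
        rw [Finset.mul_sum]
      rw [s8]
      have hpow : (2:ℝ)^(n+1) = 2 * 2^n := by ring
      rw [hpow]
      set A := ∑ t : Fin n → Bool, (g t)^2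
      set B := ∑ t : Fin n → Bool, (h t)^2
      set C := ∑ t : Fin n → Bool, g t
      set DG := ∑ i : Fin n, ∑ t : Fin n → Bool, (g t - g (bflip i t))^2
      set DH := ∑ i : Fin n, ∑ t : Fin n → Bool, (h t - h (bflip i t))^2
      have hB : (0:ℝ) ≤ B := by positivity
      nlinarith [IHg, hnn, pow_pos (show (0:ℝ) < 2 by norm_num) n]


lemma bneg_cons {n : ℕ} (b : Bool) (t : Fin n → Bool) :
    (fun i => !((Fin.cons b t : Fin (n+1) → Bool) i)) = Fin.cons (!b) (fun i => !(t i)) := by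
  funext i
  refine Fin.cases ?_ (fun j => ?_) i <;> simp

lemma sum_bneg {n : ℕ} (f : (Fin n → Bool) → ℝ) :
    ∑ s : Fin n → Bool, f (fun i => !(s i)) = ∑ s : Fin n → Bool, f s := by
  have hinv : Function.Involutive (fun (s : Fin n → Bool) => fun i => !(s i)) := by
    intro s; funext i; simp
  exact Equiv.sum_comp hinv.toPerm f

lemma odd_sum_zero {n : ℕ} (h : (Fin n → Bool) → ℝ)
    (hodd : ∀ s : Fin n → Bool, h (fun i => !(s i)) = - h s) :
    ∑ s : Fin n → Bool, h s = 0 := by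
  have h1 := sum_bneg h
  simp only [hodd] at h1
  rw [Finset.sum_neg_distrib] at h1
  linarith

lemma poincare2 : ∀ (n : ℕ) (f : (Fin n → Bool) → ℝ),
    (∀ s : Fin n → Bool, f (fun i => !(s i)) = f s) →
    2 * ((2^n : ℝ) * (∑ s : Fin n → Bool, (f s)^2) - (∑ s : Fin n → Bool, f s)^2)
      ≤ (2^n : ℝ)/4 * ∑ i : Fin n, ∑ s : Fin n → Bool, (f s - f (bflip i s))^2 := by
  intro n
  induction n with
  | zero =>
      intro f _
      simp
  | succ n IH =>
      intro f heven
      set u : (Fin n → Bool) → ℝ := fun t => f (Fin.cons true t) with hu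
      set v : (Fin n → Bool) → ℝ := fun t => f (Fin.cons false t) with hv
      set g : (Fin n → Bool) → ℝ := fun t => (u t + v t)/2 with hg
      set h : (Fin n → Bool) → ℝ := fun t => (u t - v t)/2 with hh
      have huv : ∀ t : Fin n → Bool, u (fun i => !(t i)) = v t := by
        intro t
        have : (Fin.cons true (fun i => !(t i)) : Fin (n+1) → Bool)
            = (fun i => !((Fin.cons false t : Fin (n+1) → Bool) i)) := by
          rw [bneg_cons]; rfl
        simp only [hu, hv, this, heven]
      have hvu : ∀ t : Fin n → Bool, v (fun i => !(t i)) = u t := by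
        intro t
        have : (Fin.cons false (fun i => !(t i)) : Fin (n+1) → Bool)
            = (fun i => !((Fin.cons true t : Fin (n+1) → Bool) i)) := by
          rw [bneg_cons]; rfl
        simp only [hu, hv, this, heven]
      have hgeven : ∀ t : Fin n → Bool, g (fun i => !(t i)) = g t := by
        intro t; simp only [hg, huv, hvu]; ring
      have hhodd : ∀ t : Fin n → Bool, h (fun i => !(t i)) = - h t := by
        intro t; simp only [hh, huv, hvu]; ring
      have hsum0 : ∑ t : Fin n → Bool, h t = 0 := odd_sum_zero h hhodd
      have e1 : ∑ s : Fin (n+1) → Bool, f s = 2 * ∑ t : Fin n → Bool, g t := by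
        rw [sum_cons f, Finset.mul_sum]
        refine Finset.sum_congr rfl fun t _ => ?_
        simp only [hg, hu, hv]; ring
      have e2 : ∑ s : Fin (n+1) → Bool, (f s)^2
          = ∑ t : Fin n → Bool, (2 * (g t)^2 + 2 * (h t)^2) := by
        rw [sum_cons (fun s => (f s)^2)]
        refine Finset.sum_congr rfl fun t _ => ?_
        simp only [hg, hh, hu, hv]; ring
      have e3 : ∑ s : Fin (n+1) → Bool, (f s - f (bflip 0 s))^2
          = ∑ t : Fin n → Bool, 8 * (h t)^2 := by
        rw [sum_cons (fun s => (f s - f (bflip 0 s))^2)]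
        refine Finset.sum_congr rfl fun t _ => ?_
        rw [bflip_cons_zero, bflip_cons_zero]
        simp only [hh, hu, hv, Bool.not_true, Bool.not_false]; ring
      have e4 : ∀ i : Fin n, ∑ s : Fin (n+1) → Bool, (f s - f (bflip i.succ s))^2
          = ∑ t : Fin n → Bool,
              (2 * (g t - g (bflip i t))^2 + 2 * (h t - h (bflip i t))^2) := by
        intro i
        rw [sum_cons (fun s => (f s - f (bflip i.succ s))^2)]
        refine Finset.sum_congr rfl fun t _ => ?_
        rw [bflip_cons_succ, bflip_cons_succ]
        simp only [hg, hh, hu, hv]; ring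
      have e5 : ∑ i : Fin (n+1), ∑ s : Fin (n+1) → Bool, (f s - f (bflip i s))^2
          = (∑ t : Fin n → Bool, 8 * (h t)^2)
            + ∑ i : Fin n, ∑ t : Fin n → Bool,
                (2 * (g t - g (bflip i t))^2 + 2 * (h t - h (bflip i t))^2) := by
        rw [Fin.sum_univ_succ, e3]
        congr 1
        exact Finset.sum_congr rfl fun i _ => e4 i
      rw [e1, e2, e5]
      have IHg := IH g hgeven
      have IHh := poincare1 n h
      rw [hsum0] at IHh
      have sg : ∑ t : Fin n → Bool, (2 * (g t)^2 + 2 * (h t)^2)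
          = 2 * (∑ t : Fin n → Bool, (g t)^2) + 2 * ∑ t : Fin n → Bool, (h t)^2 := by
        rw [Finset.sum_add_distrib, Finset.mul_sum, Finset.mul_sum]
      have sd : ∑ i : Fin n, ∑ t : Fin n → Bool,
            (2 * (g t - g (bflip i t))^2 + 2 * (h t - h (bflip i t))^2)
          = 2 * (∑ i : Fin n, ∑ t : Fin n → Bool, (g t - g (bflip i t))^2)
            + 2 * ∑ i : Fin n, ∑ t : Fin n → Bool, (h t - h (bflip i t))^2 := by
        rw [Finset.mul_sum, Finset.mul_sum, ← Finset.sum_add_distrib]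
        refine Finset.sum_congr rfl fun i _ => ?_
        rw [Finset.mul_sum, Finset.mul_sum, ← Finset.sum_add_distrib]
      rw [sg, sd]
      have s8 : ∑ t : Fin n → Bool, 8 * (h t)^2 = 8 * ∑ t : Fin n → Bool, (h t)^2 := by
        rw [Finset.mul_sum]
      rw [s8]
      have hpow : (2:ℝ)^(n+1) = 2 * 2^n := by ring
      rw [hpow]
      nlinarith [IHg, IHh, pow_pos (show (0:ℝ) < 2 by norm_num) n]


def S {n : ℕ} (a : Fin n → ℝ) (s : Fin n → Bool) : ℝ :=
  ∑ i, a i * (if s i then 1 else -1)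

lemma S_even {n : ℕ} (a : Fin n → ℝ) (s : Fin n → Bool) :
    S a (fun i => !(s i)) = - S a s := by
  simp only [S, ← Finset.sum_neg_distrib]
  refine Finset.sum_congr rfl fun i _ => ?_
  rcases Bool.dichotomy (s i) with hs | hs <;> simp [hs]

lemma S_cons {n : ℕ} (a : Fin (n+1) → ℝ) (b : Bool) (t : Fin n → Bool) :
    S a (Fin.cons b t) = a 0 * (if b then 1 else -1)
      + S (fun i => a i.succ) t := by
  simp only [S, Fin.sum_univ_succ, Fin.cons_zero, Fin.cons_succ]

lemma sum_S_sq : ∀ (n : ℕ) (a : Fin n → ℝ),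
    ∑ s : Fin n → Bool, (S a s)^2 = (2^n : ℝ) * ∑ i, (a i)^2 := by
  intro n
  induction n with
  | zero => intro a; simp [S]
  | succ n IH =>
      intro a
      rw [sum_cons (fun s => (S a s)^2)]
      have : ∀ t : Fin n → Bool,
          (S a (Fin.cons true t))^2 + (S a (Fin.cons false t))^2
            = 2 * (a 0)^2 + 2 * (S (fun i => a i.succ) t)^2 := by
        intro t
        rw [S_cons, S_cons]
        norm_num
        ring
      rw [Finset.sum_congr rfl fun t _ => this t]
      rw [Finset.sum_add_distrib, Finset.sum_const, ← Finset.mul_sum,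
        IH (fun i => a i.succ)]
      have hcard : (Finset.univ : Finset (Fin n → Bool)).card = 2^n := by
        simp [Finset.card_univ]
      rw [hcard, nsmul_eq_mul, Fin.sum_univ_succ]
      push_cast
      ring

lemma S_flip {n : ℕ} (a : Fin n → ℝ) (i : Fin n) (s : Fin n → Bool) :
    S a (bflip i s) = S a s - 2 * (a i * (if s i then 1 else -1)) := by
  have key : S a (bflip i s) - S a s
      = ∑ j, (a j * (if bflip i s j then 1 else -1) - a j * (if s j then 1 else -1)) := by
    rw [Finset.sum_sub_distrib]; rfl
  rw [Finset.sum_eq_single i ?h1 ?h2] at key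
  · have hii : bflip i s i = !(s i) := by simp [bflip]
    rw [hii] at key
    cases hs : s i <;> (rw [hs] at key; simp at key ⊢; linarith)
  · intro j _ hj
    have : bflip i s j = s j := Function.update_of_ne hj _ _
    rw [this]; ring
  · intro hmem
    exact absurd (Finset.mem_univ i) hmem

lemma abs_S_flip_sq_le {n : ℕ} (a : Fin n → ℝ) (i : Fin n) (s : Fin n → Bool) :
    (|S a s| - |S a (bflip i s)|)^2 ≤ 4 * (a i)^2 := by
  have h1 := abs_sub_abs_le_abs_sub (S a s) (S a (bflip i s))
  have h2 : |S a s - S a (bflip i s)| = 2 * |a i| := by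
    rw [S_flip]
    have : S a s - (S a s - 2 * (a i * (if s i then 1 else -1)))
        = 2 * (a i * (if s i then 1 else -1)) := by ring
    rw [this]
    rcases Bool.dichotomy (s i) with hs | hs <;> rw [hs] <;> simp [abs_mul]
  rw [h2] at h1
  have h1b := abs_sub_abs_le_abs_sub (S a (bflip i s)) (S a s)
  rw [abs_sub_comm, h2] at h1b
  nlinarith [sq_abs (a i)]


lemma min_abs_ge {x : ℝ} : |x| - x^2/4 ≤ min |x| 1 := by
  rcases le_total (|x|) 1 with h | h
  · rw [min_eq_left h]
    nlinarith [sq_nonneg x]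
  · rw [min_eq_right h]
    nlinarith [sq_nonneg (|x| - 2), sq_abs x]

end RTK

open RTK


/-- Expectation of `min{|∑ aᵢ εᵢ|, 1}` over independent Rademacher signs,
written as a uniform average over all sign patterns `s : Fin n → Bool`. -/
theorem rademacher_truncated_khintchine {n : ℕ} (a : Fin n → ℝ)
    (ha : Real.sqrt (∑ i, (a i)^2) = 1) :
    (1 / 2^n : ℝ) *
        ∑ s : Fin n → Bool,
          min |∑ i, a i * (if s i then 1 else -1)| 1
      ≥ 1 / Real.sqrt 2 - 1/4 := by
  have hsum : ∑ i, (a i)^2 = 1 := Real.sqrt_eq_one.mp ha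
  have hNpos : (0:ℝ) < 2^n := by positivity
  have hSdef : ∀ s : Fin n → Bool,
      (∑ i, a i * (if s i then 1 else -1)) = RTK.S a s := fun s => rfl
  simp only [hSdef]
  have hS2 : ∑ s : Fin n → Bool, (RTK.S a s)^2 = (2^n : ℝ) := by
    rw [RTK.sum_S_sq n a, hsum, mul_one]
  have heven : ∀ s : Fin n → Bool, |RTK.S a (fun i => !(s i))| = |RTK.S a s| := by
    intro s; rw [RTK.S_even, abs_neg]
  have key := RTK.poincare2 n (fun s => |RTK.S a s|) heven
  simp only [sq_abs] at key
  rw [hS2] at key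
  set A := ∑ s : Fin n → Bool, |RTK.S a s| with hA
  have hAnn : 0 ≤ A := Finset.sum_nonneg fun s _ => abs_nonneg _
  have hder : ∑ i : Fin n, ∑ s : Fin n → Bool,
      (|RTK.S a s| - |RTK.S a (bflip i s)|)^2 ≤ 4 * (2^n : ℝ) := by
    have h1 : ∀ i : Fin n, ∑ s : Fin n → Bool,
        (|RTK.S a s| - |RTK.S a (bflip i s)|)^2 ≤ (2^n : ℝ) * (4 * (a i)^2) := by
      intro i
      calc ∑ s : Fin n → Bool, (|RTK.S a s| - |RTK.S a (bflip i s)|)^2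
          ≤ ∑ s : Fin n → Bool, 4 * (a i)^2 :=
            Finset.sum_le_sum fun s _ => RTK.abs_S_flip_sq_le a i s
        _ = (2^n : ℝ) * (4 * (a i)^2) := by
            rw [Finset.sum_const, nsmul_eq_mul]
            congr 1
            simp [Finset.card_univ]
    calc ∑ i : Fin n, ∑ s : Fin n → Bool, (|RTK.S a s| - |RTK.S a (bflip i s)|)^2
        ≤ ∑ i : Fin n, (2^n : ℝ) * (4 * (a i)^2) :=
          Finset.sum_le_sum fun i _ => h1 i
      _ = 4 * (2^n : ℝ) := by
          rw [← Finset.mul_sum, ← Finset.mul_sum, hsum]; ring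
  have hA2 : (2^n : ℝ)^2 ≤ 2 * A^2 := by nlinarith [key, hder, hNpos]
  have hr2 : (Real.sqrt 2)^2 = 2 := Real.sq_sqrt (by norm_num)
  have hrpos : 0 < Real.sqrt 2 := Real.sqrt_pos.mpr (by norm_num)
  have hAge : (2^n : ℝ) ≤ A * Real.sqrt 2 := by
    nlinarith [hA2, hAnn, hrpos, hNpos, mul_nonneg hAnn hrpos.le]
  have hmin : A - (2^n : ℝ)/4 ≤ ∑ s : Fin n → Bool, min |RTK.S a s| 1 := by
    have : ∑ s : Fin n → Bool, (|RTK.S a s| - (RTK.S a s)^2/4)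
        ≤ ∑ s : Fin n → Bool, min |RTK.S a s| 1 :=
      Finset.sum_le_sum fun s _ => RTK.min_abs_ge
    rw [Finset.sum_sub_distrib] at this
    have h4 : ∑ s : Fin n → Bool, (RTK.S a s)^2/4 = (2^n : ℝ)/4 := by
      rw [← Finset.sum_div, hS2]
    rw [h4] at this
    exact this
  rw [ge_iff_le, ← sub_nonneg]
  have hfin : (2^n : ℝ) * (1 / Real.sqrt 2 - 1/4) ≤ ∑ s : Fin n → Bool, min |RTK.S a s| 1 := by
    have hstep : (2^n : ℝ) * (1 / Real.sqrt 2) ≤ A := by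
      rw [mul_one_div, div_le_iff₀ hrpos]
      exact hAge
    calc (2^n : ℝ) * (1 / Real.sqrt 2 - 1/4)
        = (2^n : ℝ) * (1 / Real.sqrt 2) - (2^n : ℝ)/4 := by ring
      _ ≤ A - (2^n : ℝ)/4 := by linarith
      _ ≤ _ := hmin
  have h5 : (1 / 2^n : ℝ) * ((2^n : ℝ) * (1 / Real.sqrt 2 - 1/4))
      = 1 / Real.sqrt 2 - 1/4 := by
    field_simp
  nlinarith [mul_le_mul_of_nonneg_left hfin (le_of_lt (by positivity : (0:ℝ) < 1/2^n))]
end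

section
/- Define F(t_1, t_2) = √(tanh²t_1 + tanh²t_2) + exp(−log cosh t_1 − log cosh t_2 − √(t_1² + t_2²)) − 1 for t_1, t_2 ≥ 0. Then F(t_1, t_2) ≥ 0 for all t_1, t_2 ≥ 0, with F(0,0) = 0. -/
/-!
Put `x = tanh t₁`, `y = tanh t₂`. Since `exp (-log (cosh t) - t) = 1 - tanh t`, the exponential
term equals `(1 - x) (1 - y) exp (t₁ + t₂ - √(t₁² + t₂²))`. The defect `a + b - √(a² + b²)` is
monotone in each variable and `tanh t ≤ t`, so the exponent may be lowered to
`d = x + y - √(x² + y²) ≥ 0`. What remains is `1 ≤ s + (1 - x) (1 - y) exp d` with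
`s = √(x² + y²)`, and already the quadratic lower bound `1 + d + d²/2` of `exp d` suffices.
-/

open Real

namespace Real

theorem sinh_le_mul_cosh {t : ℝ} (ht : 0 ≤ t) : sinh t ≤ t * cosh t := by
  have hmono : MonotoneOn (fun u : ℝ => u * cosh u - sinh u) (Set.Ici 0) := by
    refine monotoneOn_of_deriv_nonneg (convex_Ici 0) (by fun_prop) (by fun_prop) fun u hu => ?_
    rw [interior_Ici, Set.mem_Ioi] at hu
    have hderiv : deriv (fun u : ℝ => u * cosh u - sinh u) u = u * sinh u := by
      rw [deriv_fun_sub (by fun_prop) (by fun_prop), deriv_fun_mul (by fun_prop) (by fun_prop)]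
      simp [deriv_cosh, deriv_sinh]
    rw [hderiv]
    exact mul_nonneg hu.le (sinh_nonneg_iff.2 hu.le)
  simpa using hmono Set.self_mem_Ici ht ht

theorem tanh_le_self {t : ℝ} (ht : 0 ≤ t) : tanh t ≤ t := by
  rw [tanh_eq_sinh_div_cosh, div_le_iff₀ (cosh_pos t)]
  exact sinh_le_mul_cosh ht

theorem tanh_nonneg {t : ℝ} (ht : 0 ≤ t) : 0 ≤ tanh t := by
  rw [tanh_eq_sinh_div_cosh]
  exact div_nonneg (sinh_nonneg_iff.2 ht) (cosh_pos t).le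

theorem exp_neg_log_cosh_sub_self (t : ℝ) : exp (-log (cosh t) - t) = 1 - tanh t := by
  have hcosh := (cosh_pos t).ne'
  rw [sub_eq_add_neg, exp_add, exp_neg, exp_log (cosh_pos t), ← cosh_sub_sinh,
    tanh_eq_sinh_div_cosh]
  field_simp

end Real

/-- Triangle inequality: `√(a² + b²) ≤ √(x² + y²) + (a - x) + (b - y)`. -/
theorem add_sub_sqrt_sq_add_sq_le {x y a b : ℝ} (hxa : x ≤ a) (hyb : y ≤ b) :
    x + y - √(x ^ 2 + y ^ 2) ≤ a + b - √(a ^ 2 + b ^ 2) := by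
  set s := √(x ^ 2 + y ^ 2)
  have hs : s ^ 2 = x ^ 2 + y ^ 2 := sq_sqrt (by positivity)
  have hxs : x ≤ s := (le_abs_self x).trans (abs_le_sqrt (by nlinarith))
  have hys : y ≤ s := (le_abs_self y).trans (abs_le_sqrt (by nlinarith))
  have hs₀ : 0 ≤ s := sqrt_nonneg _
  have htriangle : √(a ^ 2 + b ^ 2) ≤ s + (a - x) + (b - y) := by
    rw [sqrt_le_left (by linarith)]
    nlinarith [mul_nonneg (sub_nonneg.2 hxa) (sub_nonneg.2 hyb)]
  linarith

theorem one_le_add_mul_quadratic {x y s : ℝ} (hxy : 0 ≤ x * y) (hs₀ : 0 ≤ s)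
    (hs : s ^ 2 = x ^ 2 + y ^ 2) :
    1 ≤ s + (1 - x) * (1 - y) * (1 + (x + y - s) + (x + y - s) ^ 2 / 2) := by
  -- modulo `s² = x² + y²`, the right side minus `1` is `d² (s + x y) / 2` with `d = x + y - s`
  have hsq : 0 ≤ (x + y - s) ^ 2 * (s + x * y) / 2 := by positivity
  linear_combination hsq - (1 + (x + y - s)) / 2 * hs

theorem one_le_sqrt_add_mul_exp {x y : ℝ} (hx₀ : 0 ≤ x) (hx₁ : x ≤ 1) (hy₀ : 0 ≤ y)
    (hy₁ : y ≤ 1) :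
    1 ≤ √(x ^ 2 + y ^ 2) + (1 - x) * (1 - y) * exp (x + y - √(x ^ 2 + y ^ 2)) := by
  set s := √(x ^ 2 + y ^ 2)
  have hs : s ^ 2 = x ^ 2 + y ^ 2 := sq_sqrt (by positivity)
  have hsxy : s ≤ x + y := by
    rw [sqrt_le_left (by linarith)]
    nlinarith [mul_nonneg hx₀ hy₀]
  calc 1 ≤ s + (1 - x) * (1 - y) * (1 + (x + y - s) + (x + y - s) ^ 2 / 2) :=
        one_le_add_mul_quadratic (mul_nonneg hx₀ hy₀) (sqrt_nonneg _) hs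
    _ ≤ s + (1 - x) * (1 - y) * exp (x + y - s) := by
        gcongr
        exact quadratic_le_exp_of_nonneg (sub_nonneg.2 hsxy)

theorem F_nonneg :
    (∀ t₁ t₂ : ℝ, 0 ≤ t₁ → 0 ≤ t₂ →
      Real.sqrt (Real.tanh t₁ ^ 2 + Real.tanh t₂ ^ 2) +
        Real.exp (-Real.log (Real.cosh t₁) - Real.log (Real.cosh t₂)
          - Real.sqrt (t₁^2 + t₂^2)) - 1 ≥ 0) ∧
    Real.sqrt (Real.tanh 0 ^ 2 + Real.tanh 0 ^ 2) +
        Real.exp (-Real.log (Real.cosh 0) - Real.log (Real.cosh 0)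
          - Real.sqrt (0^2 + 0^2)) - 1 = 0 := by
  refine ⟨fun t₁ t₂ h₁ h₂ => ?_, by simp⟩
  have hexp : exp (-log (cosh t₁) - log (cosh t₂) - √(t₁ ^ 2 + t₂ ^ 2)) =
      (1 - tanh t₁) * (1 - tanh t₂) * exp (t₁ + t₂ - √(t₁ ^ 2 + t₂ ^ 2)) := by
    rw [← exp_neg_log_cosh_sub_self, ← exp_neg_log_cosh_sub_self, ← exp_add, ← exp_add]
    ring_nf
  rw [ge_iff_le, sub_nonneg, hexp]
  calc 1 ≤ √(tanh t₁ ^ 2 + tanh t₂ ^ 2) + (1 - tanh t₁) * (1 - tanh t₂) *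
        exp (tanh t₁ + tanh t₂ - √(tanh t₁ ^ 2 + tanh t₂ ^ 2)) :=
      one_le_sqrt_add_mul_exp (tanh_nonneg h₁) (tanh_lt_one t₁).le (tanh_nonneg h₂)
        (tanh_lt_one t₂).le
    _ ≤ _ := by
      gcongr _ + _ * exp ?_
      · exact mul_nonneg (sub_nonneg.2 (tanh_lt_one t₁).le) (sub_nonneg.2 (tanh_lt_one t₂).le)
      · exact add_sub_sqrt_sq_add_sq_le (tanh_le_self h₁) (tanh_le_self h₂)
end

section
/- For p ∈ [0,1]^n and q = 1−p, with P = Ber(p) and Q = Ber(q), Σ_{ω∈{0,1}^n} min{P(ω), Q(ω)} ≥ (∏_{i=1}^n 2√(p_i q_i)) · exp(−(1/2)·(Σ_{i=1}^n (log(p_i/q_i))²)^{1/2}). -/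
/-!
Write `P = Ber(p)`, `Q = Ber(1 - p)` and `a i = log (p i / (1 - p i))`. Since
`min x y = √(x y) · exp (-|log (x / y)| / 2)`, and at every `ω` the product `P ω · Q ω` equals
`∏ p i (1 - p i)` while `log (P ω / Q ω) = ∑ ±a i` is a Rademacher sum, the left-hand side is
`∏ √(p i (1 - p i)) · ∑_ω exp (-|∑ ±a i| / 2)`. Jensen's inequality bounds the sum below by
`2^n · exp (-𝔼|∑ ±a i| / 2)`, and `𝔼|∑ ±a i| ≤ √(𝔼 (∑ ±a i)²) = √(∑ a i²)` because the signs are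
orthogonal.
-/

open Finset

lemma min_eq_sqrt_mul_mul_exp_neg_abs_log_div {x y : ℝ} (hx : 0 < x) (hy : 0 < y) :
    min x y = √(x * y) * Real.exp (-|Real.log (x / y)| / 2) := by
  obtain ⟨u, rfl⟩ : ∃ u, Real.exp u = x := ⟨_, Real.exp_log hx⟩
  obtain ⟨v, rfl⟩ : ∃ v, Real.exp v = y := ⟨_, Real.exp_log hy⟩
  have hmin : min u v = (u + v) / 2 + -|u - v| / 2 := by
    rcases le_total u v with h | h
    · rw [min_eq_left h, abs_of_nonpos (sub_nonpos.2 h)]; ring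
    · rw [min_eq_right h, abs_of_nonneg (sub_nonneg.2 h)]; ring
  rw [← Real.exp_add, ← Real.exp_sub, Real.log_exp, ← Real.exp_half, ← Real.exp_add, ← hmin,
    Real.exp_monotone.map_min]

-- Jensen for `exp`, from the tangent line `exp m * (y - m + 1) ≤ exp y` at the mean `m`.
lemma card_mul_exp_sum_div_card_le_sum_exp {α : Type*} [Fintype α] (t : α → ℝ) :
    Fintype.card α * Real.exp ((∑ x, t x) / Fintype.card α) ≤ ∑ x, Real.exp (t x) := by
  set m := (∑ x, t x) / Fintype.card α
  rcases isEmpty_or_nonempty α with _ | _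
  · simp
  have hsum : ∑ x, (t x - m) = 0 := by
    rw [sum_sub_distrib, sum_const, card_univ, nsmul_eq_mul, mul_div_cancel₀ _ (by positivity),
      sub_self]
  calc Fintype.card α * Real.exp m = ∑ x, Real.exp m * (t x - m + 1) := by
        rw [← mul_sum, sum_add_distrib, hsum, sum_const, card_univ, nsmul_one]; ring
    _ ≤ ∑ x, Real.exp m * Real.exp (t x - m) := by
        gcongr; exact Real.add_one_le_exp _
    _ = ∑ x, Real.exp (t x) := by simp only [← Real.exp_add, add_sub_cancel]

section SignedSum

variable {ι : Type*} [Fintype ι] [DecidableEq ι]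

def signedSum (a : ι → ℝ) (ω : ι → Bool) : ℝ := ∑ i, if ω i then a i else -a i

lemma sum_signedSum_sq (a : ι → ℝ) :
    ∑ ω : ι → Bool, signedSum a ω ^ 2 = 2 ^ Fintype.card ι * ∑ i, a i ^ 2 := by
  set s : ι → (ι → Bool) → ℝ := fun i ω => if ω i then a i else -a i
  -- flipping the `i`-th coordinate negates `s i` and fixes every other `s j`
  have orthogonal {i j : ι} (hji : j ≠ i) : ∑ ω, s i ω * s j ω = 0 := by
    let flip (ω : ι → Bool) := Function.update ω i (!ω i)
    have hflip : Function.Involutive flip := fun ω => by simp [flip]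
    have hneg (ω) : s i (flip ω) * s j (flip ω) = -(s i ω * s j ω) := by
      by_cases h : ω i <;> by_cases h' : ω j <;> simp [s, flip, h, h', Function.update_of_ne hji]
    have := Equiv.sum_comp hflip.toPerm (fun ω => s i ω * s j ω)
    simp only [Function.Involutive.coe_toPerm, hneg, sum_neg_distrib] at this
    linarith
  calc ∑ ω, signedSum a ω ^ 2 = ∑ i, ∑ j, ∑ ω, s i ω * s j ω := by
        simp_rw [signedSum, sq, sum_mul_sum]; rw [sum_comm]; exact sum_congr rfl fun _ _ => sum_comm
    _ = ∑ i, ∑ ω : ι → Bool, a i ^ 2 := by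
        refine sum_congr rfl fun i _ => ?_
        rw [sum_eq_single i (fun j _ => orthogonal) (by simp)]
        refine sum_congr rfl fun ω _ => ?_
        by_cases h : ω i <;> simp [s, h, sq]
    _ = 2 ^ Fintype.card ι * ∑ i, a i ^ 2 := by simp [mul_sum]

lemma sum_abs_signedSum_le (a : ι → ℝ) :
    ∑ ω : ι → Bool, |signedSum a ω| ≤ 2 ^ Fintype.card ι * √(∑ i, a i ^ 2) := by
  have hcs := sq_sum_le_card_mul_sum_sq (s := univ) (f := fun ω : ι → Bool => |signedSum a ω|)
  simp only [sq_abs, sum_signedSum_sq, card_univ, Fintype.card_fun, Fintype.card_bool,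
    Nat.cast_pow, Nat.cast_ofNat] at hcs
  calc ∑ ω : ι → Bool, |signedSum a ω| = √((∑ ω : ι → Bool, |signedSum a ω|) ^ 2) :=
        (Real.sqrt_sq (sum_nonneg fun _ _ => abs_nonneg _)).symm
    _ ≤ √((2 ^ Fintype.card ι) ^ 2 * ∑ i, a i ^ 2) :=
        Real.sqrt_le_sqrt (hcs.trans_eq (by ring))
    _ = 2 ^ Fintype.card ι * √(∑ i, a i ^ 2) := by
        rw [Real.sqrt_mul (by positivity), Real.sqrt_sq (by positivity)]

lemma two_pow_card_mul_exp_le_sum_exp_neg_abs_signedSum (a : ι → ℝ) :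
    2 ^ Fintype.card ι * Real.exp (-(1 / 2) * √(∑ i, a i ^ 2))
      ≤ ∑ ω : ι → Bool, Real.exp (-|signedSum a ω| / 2) := by
  have jensen := card_mul_exp_sum_div_card_le_sum_exp fun ω : ι → Bool => -|signedSum a ω| / 2
  simp only [Fintype.card_fun, Fintype.card_bool, Nat.cast_pow, Nat.cast_ofNat] at jensen
  refine le_trans ?_ jensen
  gcongr
  rw [← sum_div, sum_neg_distrib, div_div, le_div_iff₀ (by positivity)]
  linarith [sum_abs_signedSum_le a]

end SignedSum

section Bernoulli

variable {n : ℕ} {p : Fin n → ℝ}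

lemma berProd_pos (hp : ∀ i, p i ∈ Set.Ioo (0 : ℝ) 1) (ω : Fin n → Bool) : 0 < berProd p ω :=
  prod_pos fun i _ => by split_ifs <;> linarith [(hp i).1, (hp i).2]

lemma berProd_mul_berProd_one_sub (p : Fin n → ℝ) (ω : Fin n → Bool) :
    berProd p ω * berProd (fun i => 1 - p i) ω = ∏ i, p i * (1 - p i) := by
  rw [berProd, berProd, ← prod_mul_distrib]
  exact prod_congr rfl fun i _ => by split_ifs <;> ring

lemma log_berProd_div_berProd_one_sub (hp : ∀ i, p i ∈ Set.Ioo (0 : ℝ) 1) (ω : Fin n → Bool) :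
    Real.log (berProd p ω / berProd (fun i => 1 - p i) ω)
      = signedSum (fun i => Real.log (p i / (1 - p i))) ω := by
  have h1p (i) : 0 < 1 - p i := sub_pos.2 (hp i).2
  rw [berProd, berProd, ← prod_div_distrib, Real.log_prod fun i _ => ?_]
  · refine sum_congr rfl fun i _ => ?_
    split_ifs
    · rfl
    · rw [sub_sub_cancel, ← Real.log_inv, inv_div]
  · split_ifs
    · exact (div_pos (hp i).1 (h1p i)).ne'
    · rw [sub_sub_cancel]; exact (div_pos (h1p i) (hp i).1).ne'

lemma min_berProd_berProd_one_sub (hp : ∀ i, p i ∈ Set.Ioo (0 : ℝ) 1) (ω : Fin n → Bool) :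
    min (berProd p ω) (berProd (fun i => 1 - p i) ω)
      = (∏ i, √(p i * (1 - p i)))
        * Real.exp (-|signedSum (fun i => Real.log (p i / (1 - p i))) ω| / 2) := by
  have hp' (i) : 1 - p i ∈ Set.Ioo (0 : ℝ) 1 := ⟨sub_pos.2 (hp i).2, by linarith [(hp i).1]⟩
  rw [min_eq_sqrt_mul_mul_exp_neg_abs_log_div (berProd_pos hp ω) (berProd_pos hp' ω),
    berProd_mul_berProd_one_sub, Real.sqrt_prod _ fun i _ => ?_,
    log_berProd_div_berProd_one_sub hp]
  exact mul_nonneg (hp i).1.le (hp' i).1.le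

end Bernoulli

theorem min_sum_lower_bound {n : ℕ} (p q : Fin n → ℝ)
    (hp : ∀ i, p i ∈ Set.Ioo (0:ℝ) 1) (hq : ∀ i, q i = 1 - p i) :
    ∑ ω : Fin n → Bool, min (berProd p ω) (berProd q ω)
      ≥ (∏ i, 2 * Real.sqrt (p i * q i)) *
        Real.exp (-(1/2) * Real.sqrt (∑ i, (Real.log (p i / q i))^2)) := by
  obtain rfl : q = fun i => 1 - p i := funext hq
  simp only [min_berProd_berProd_one_sub hp, ← mul_sum, prod_mul_distrib, prod_const, card_univ,
    Fintype.card_fin]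
  rw [ge_iff_le, mul_comm (2 ^ n : ℝ), mul_assoc]
  gcongr
  simpa using two_pow_card_mul_exp_le_sum_exp_neg_abs_signedSum fun i => Real.log (p i / (1 - p i))
end
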